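/- arXiv:1305.4780 — 9 statements merged into one kernel-verified Lean document; each statement's English description precedes it below -/
import Mathlib

section
/- For barcodes f and g, if C(f^∧p) = C(g^∧p) for every integer p ≥ 1, then f = g. In other words, the map sending a barcode f to its exterior critical series (the family of critical series of all its exterior powers) is one-to-one. -/
/-!
At a grade `c` lying at or below every `p`-fold sum of birth grades of a barcode `f`, no death
grade of `f^∧p` occurs, so `C(f^∧p)(c)` counts the `p`-element sub-multisets with birth sum `c`.
Evaluating at the least `p`-fold birth sum of `f` and `g` together shows that `f` and `g` have the
same least `p`-fold birth sums for every `p`; these determine the multiset of birth grades, since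
the `(p+1)`-st smallest birth is the difference of two of them.

Hence `B(f^∧p) = B(g^∧p)` and so `D(f^∧p) = D(g^∧p)`. Let `u` be the least lifespan in `f`
and `g`. Lowering every lifespan by `u` divides each death series by `x^u` and turns the bars of
lifespan `u` into bars of lifespan `0`, which contribute nothing to any critical series.
Discarding them leaves barcodes with fewer bars and equal exterior critical series, which agree
by induction; the discarded bars are then recovered from the birth grades.
-/

noncomputable section

/-- A barcode: a finite multiset of bars `(α, ℓ)` with positive lifespan `ℓ`. -/
def IsBarcode (f : Multiset (ℝ × ℝ)) : Prop := ∀ b ∈ f, (0 : ℝ) < b.2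

/-- The `p`-th exterior power of a barcode: each `p`-element sub-multiset `s`
contributes the bar whose birth grade is the sum of the birth grades in `s`
and whose lifespan is the minimum of the lifespans in `s`. -/
noncomputable def extPow (f : Multiset (ℝ × ℝ)) (p : ℕ) : Multiset (ℝ × ℝ) :=
  (Multiset.powersetCard p f).map
    (fun s => ((s.map Prod.fst).sum, sInf {x : ℝ | x ∈ s.map Prod.snd}))

/-- The birth series `B(f) = Σ_{(α,ℓ)∈f} x^α`. -/
noncomputable def birthSeries (f : Multiset (ℝ × ℝ)) : ℝ →₀ ℤ :=
  (f.map (fun b => Finsupp.single b.1 (1 : ℤ))).sum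

/-- The death series `D(f) = Σ_{(α,ℓ)∈f} x^{α+ℓ}`. -/
noncomputable def deathSeries (f : Multiset (ℝ × ℝ)) : ℝ →₀ ℤ :=
  (f.map (fun b => Finsupp.single (b.1 + b.2) (1 : ℤ))).sum

/-- The critical series `C(f) = B(f) − D(f)`. -/
noncomputable def critSeries (f : Multiset (ℝ × ℝ)) : ℝ →₀ ℤ :=
  birthSeries f - deathSeries f

/-- The lifespan series `L(f) = Σ_{(α,ℓ)∈f} x^ℓ`. -/
noncomputable def lifespanSeries (f : Multiset (ℝ × ℝ)) : ℝ →₀ ℤ :=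
  (f.map (fun b => Finsupp.single b.2 (1 : ℤ))).sum

/-- The drift `Δ(f) = Σ_{(α,ℓ)∈f} α`. -/
noncomputable def drift (f : Multiset (ℝ × ℝ)) : ℝ :=
  (f.map Prod.fst).sum

/-- The moment `μ(P) = Σ_β P(β)·β`. -/
noncomputable def moment (P : ℝ →₀ ℤ) : ℝ :=
  P.sum fun β n => (n : ℝ) * β

/-- The second moment `μ₂(P) = Σ_β P(β)·β²`. -/
noncomputable def moment2 (P : ℝ →₀ ℤ) : ℝ :=
  P.sum fun β n => (n : ℝ) * β ^ 2

end

/-- `sInf` of the members: the least element when `m ≠ 0`, and the junk value `0` for `m = 0`.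
This is the lifespan `extPow` assigns to a sub-multiset. -/
noncomputable def realMin (m : Multiset ℝ) : ℝ := sInf {x | x ∈ m}

theorem realMin_le {m : Multiset ℝ} {x : ℝ} (hx : x ∈ m) : realMin m ≤ x :=
  csInf_le (m.toFinset.bddBelow.mono fun _ ↦ Multiset.mem_toFinset.mpr) hx

theorem realMin_mem {m : Multiset ℝ} (hm : m ≠ 0) : realMin m ∈ m := by
  have hset : {x | x ∈ m} = (m.toFinset : Set ℝ) := by ext; simp
  have := (Multiset.toFinset_nonempty.mpr hm).csInf_mem
  rw [realMin, hset]
  simpa using this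

theorem Multiset.ne_zero_of_mem {α : Type*} {a : α} {m : Multiset α} (ha : a ∈ m) : m ≠ 0 :=
  ne_of_mem_of_not_mem' ha (Multiset.notMem_zero a)

theorem realMin_eq_of_mem {m : Multiset ℝ} {x : ℝ} (hx : x ∈ m) (hle : ∀ y ∈ m, x ≤ y) :
    realMin m = x :=
  le_antisymm (realMin_le hx) (hle _ (realMin_mem (Multiset.ne_zero_of_mem hx)))

theorem realMin_map_sub {m : Multiset ℝ} (hm : m ≠ 0) (u : ℝ) :
    realMin (m.map (· - u)) = realMin m - u := by
  refine realMin_eq_of_mem (Multiset.mem_map_of_mem _ (realMin_mem hm)) ?_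
  simp only [Multiset.mem_map, forall_exists_index, and_imp, forall_apply_eq_imp_iff₂]
  exact fun y hy ↦ sub_le_sub_right (realMin_le hy) u

theorem realMin_cons_of_forall_le {a : ℝ} {m : Multiset ℝ} (ha : ∀ x ∈ m, a ≤ x) :
    realMin (a ::ₘ m) = a :=
  realMin_eq_of_mem (Multiset.mem_cons_self a m) (Multiset.forall_mem_cons.mpr ⟨le_rfl, ha⟩)

theorem Multiset.exists_eq_cons_forall_le {m : Multiset ℝ} (hm : m ≠ 0) :
    ∃ a m', m = a ::ₘ m' ∧ ∀ x ∈ m', a ≤ x := by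
  obtain ⟨m', hm'⟩ := Multiset.exists_cons_of_mem (realMin_mem hm)
  exact ⟨realMin m, m', hm', fun x hx ↦ realMin_le (hm' ▸ Multiset.mem_cons_of_mem hx)⟩

theorem Multiset.ne_zero_of_mem_powersetCard {α : Type*} {p : ℕ} {m s : Multiset α}
    (hp : 1 ≤ p) (hs : s ∈ Multiset.powersetCard p m) : s ≠ 0 := by
  rw [Ne, ← Multiset.card_eq_zero, (Multiset.mem_powersetCard.mp hs).2]
  omega

theorem Multiset.powersetCard_filter {α : Type*} (P : α → Prop) [DecidablePred P] (n : ℕ)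
    (m : Multiset α) :
    Multiset.powersetCard n (m.filter P) =
      (Multiset.powersetCard n m).filter fun s ↦ ∀ a ∈ s, P a := by
  induction m using Multiset.induction_on generalizing n with
  | empty => cases n <;> simp [Multiset.filter_singleton, Multiset.powersetCard_zero_right]
  | cons a m ih =>
    cases n with
    | zero => simp [Multiset.filter_singleton]
    | succ n =>
      by_cases ha : P a <;> simp [ha, Multiset.powersetCard_cons, ih, Multiset.filter_add,
        Multiset.filter_map]

noncomputable def powersetCardSums (p : ℕ) (m : Multiset ℝ) : Multiset ℝ :=
  (Multiset.powersetCard p m).map Multiset.sum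

theorem powersetCardSums_one (m : Multiset ℝ) : powersetCardSums 1 m = m := by
  simp [powersetCardSums, Multiset.powersetCard_one, Multiset.map_map]

theorem powersetCardSums_ne_zero_iff {p : ℕ} {m : Multiset ℝ} :
    powersetCardSums p m ≠ 0 ↔ p ≤ Multiset.card m := by
  rw [Ne, ← Multiset.card_eq_zero, powersetCardSums, Multiset.card_map,
    Multiset.card_powersetCard, ← Ne, Nat.choose_ne_zero_iff]

theorem realMin_powersetCardSums_succ_cons {a : ℝ} {m : Multiset ℝ} (ha : ∀ x ∈ m, a ≤ x)
    {p : ℕ} (hp : p ≤ Multiset.card m) :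
    realMin (powersetCardSums (p + 1) (a ::ₘ m)) = a + realMin (powersetCardSums p m) := by
  obtain ⟨s₀, hs₀, hsum₀⟩ :=
    Multiset.mem_map.mp (realMin_mem (powersetCardSums_ne_zero_iff.mpr hp))
  have hlow : ∀ s ∈ Multiset.powersetCard p m, realMin (powersetCardSums p m) ≤ s.sum :=
    fun s hs ↦ realMin_le (Multiset.mem_map_of_mem _ hs)
  refine realMin_eq_of_mem ?_ ?_
  · refine Multiset.mem_map.mpr ⟨a ::ₘ s₀, ?_, by rw [Multiset.sum_cons, hsum₀]; rfl⟩
    rw [Multiset.powersetCard_cons]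
    exact Multiset.mem_add.mpr (Or.inr (Multiset.mem_map_of_mem _ hs₀))
  · simp only [powersetCardSums, Multiset.powersetCard_cons, Multiset.map_add, Multiset.map_map,
      Multiset.mem_add, Multiset.mem_map, Function.comp_apply, Multiset.sum_cons]
    rintro _ (⟨t, ht, rfl⟩ | ⟨s, hs, rfl⟩)
    · -- a `(p+1)`-subset of `m` is `x ::ₘ s` with `a ≤ x` and `s` a `p`-subset of `m`
      obtain ⟨htm, hcard⟩ := Multiset.mem_powersetCard.mp ht
      obtain ⟨x, hx⟩ := Multiset.card_pos_iff_exists_mem.mp (by omega : 0 < Multiset.card t)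
      obtain ⟨s, rfl⟩ := Multiset.exists_cons_of_mem hx
      have hs : s ∈ Multiset.powersetCard p m := Multiset.mem_powersetCard.mpr
        ⟨(Multiset.le_cons_self s x).trans htm, by simpa using hcard⟩
      rw [Multiset.sum_cons]
      exact add_le_add (ha x (Multiset.mem_of_le htm (Multiset.mem_cons_self x s))) (hlow s hs)
    · exact add_le_add_right (hlow s hs) a

theorem eq_of_realMin_powersetCardSums_eq {m₁ m₂ : Multiset ℝ}
    (hcard : Multiset.card m₁ = Multiset.card m₂)
    (h : ∀ p, 1 ≤ p → p ≤ Multiset.card m₁ →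
      realMin (powersetCardSums p m₁) = realMin (powersetCardSums p m₂)) :
    m₁ = m₂ := by
  induction hn : Multiset.card m₁ generalizing m₁ m₂ with
  | zero => rw [Multiset.card_eq_zero.mp hn, (Multiset.card_eq_zero (s := m₂)).mp (by omega)]
  | succ n ih =>
    obtain ⟨a₁, m₁, rfl, hle₁⟩ :=
      Multiset.exists_eq_cons_forall_le ((Multiset.card_pos (s := m₁)).mp (by omega))
    obtain ⟨a₂, m₂, rfl, hle₂⟩ :=
      Multiset.exists_eq_cons_forall_le ((Multiset.card_pos (s := m₂)).mp (by omega))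
    simp only [Multiset.card_cons, Nat.add_right_cancel_iff] at hcard hn
    obtain rfl : a₁ = a₂ := by
      simpa only [powersetCardSums_one, realMin_cons_of_forall_le hle₁,
        realMin_cons_of_forall_le hle₂] using h 1 le_rfl (by simp)
    refine congrArg _ (ih hcard (fun p _ hpn ↦ add_left_cancel (a := a₁) ?_) hn)
    rw [← realMin_powersetCardSums_succ_cons hle₁ hpn,
      ← realMin_powersetCardSums_succ_cons hle₂ (hcard ▸ hpn)]
    exact h (p + 1) (by omega) (by simp [hpn])

theorem eq_of_count_powersetCardSums_eq {m₁ m₂ : Multiset ℝ}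
    (h : ∀ p, 1 ≤ p → ∀ c, (∀ x ∈ powersetCardSums p m₁, c ≤ x) →
      (∀ x ∈ powersetCardSums p m₂, c ≤ x) →
      (powersetCardSums p m₁).count c = (powersetCardSums p m₂).count c) :
    m₁ = m₂ := by
  have hboth : ∀ p, 1 ≤ p → powersetCardSums p m₁ + powersetCardSums p m₂ ≠ 0 →
      ∃ c, IsLeast {x | x ∈ powersetCardSums p m₁} c ∧
        IsLeast {x | x ∈ powersetCardSums p m₂} c := by
    intro p hp hne
    set c := realMin (powersetCardSums p m₁ + powersetCardSums p m₂)
    have hlow₁ : ∀ x ∈ powersetCardSums p m₁, c ≤ x :=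
      fun x hx ↦ realMin_le (Multiset.mem_add.mpr (Or.inl hx))
    have hlow₂ : ∀ x ∈ powersetCardSums p m₂, c ≤ x :=
      fun x hx ↦ realMin_le (Multiset.mem_add.mpr (Or.inr hx))
    have hiff : c ∈ powersetCardSums p m₁ ↔ c ∈ powersetCardSums p m₂ := by
      rw [← Multiset.count_pos, ← Multiset.count_pos, h p hp c hlow₁ hlow₂]
    have hmem := Multiset.mem_add.mp (realMin_mem hne)
    exact ⟨c, ⟨by tauto, hlow₁⟩, ⟨by tauto, hlow₂⟩⟩
  have hcard : Multiset.card m₁ = Multiset.card m₂ := by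
    set N := max (Multiset.card m₁) (Multiset.card m₂)
    rcases Nat.eq_zero_or_pos N with hN | hN
    · omega
    have hne : powersetCardSums N m₁ + powersetCardSums N m₂ ≠ 0 := by
      rw [Ne, add_eq_zero, not_and_or, ← Ne, ← Ne, powersetCardSums_ne_zero_iff,
        powersetCardSums_ne_zero_iff]
      omega
    obtain ⟨c, ⟨hc₁, -⟩, ⟨hc₂, -⟩⟩ := hboth N hN hne
    have h₁ := powersetCardSums_ne_zero_iff.mp (Multiset.ne_zero_of_mem hc₁)
    have h₂ := powersetCardSums_ne_zero_iff.mp (Multiset.ne_zero_of_mem hc₂)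
    omega
  refine eq_of_realMin_powersetCardSums_eq hcard fun p hp hpn ↦ ?_
  obtain ⟨c, hc₁, hc₂⟩ := hboth p hp (by simp [powersetCardSums_ne_zero_iff.mpr hpn])
  exact hc₁.csInf_eq.trans hc₂.csInf_eq.symm

noncomputable def series (m : Multiset ℝ) : ℝ →₀ ℤ :=
  (m.map fun x ↦ Finsupp.single x 1).sum

theorem series_apply (m : Multiset ℝ) (x : ℝ) : series m x = m.count x := by
  induction m using Multiset.induction_on with
  | empty => simp [series]
  | cons a m ih =>
    simp only [series, Multiset.map_cons, Multiset.sum_cons, Finsupp.add_apply] at ih ⊢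
    rw [ih, Finsupp.single_apply, Multiset.count_cons]
    by_cases hx : a = x
    · simp [hx, add_comm]
    · simp [hx, Ne.symm hx]

theorem series_map (m : Multiset ℝ) (φ : ℝ → ℝ) :
    series (m.map φ) = (series m).mapDomain φ := by
  induction m using Multiset.induction_on with
  | empty => simp [series]
  | cons a m ih =>
    simp only [series, Multiset.map_cons, Multiset.sum_cons] at ih ⊢
    rw [ih, Finsupp.mapDomain_add, Finsupp.mapDomain_single]

theorem birthSeries_eq_series (k : Multiset (ℝ × ℝ)) :
    birthSeries k = series (k.map Prod.fst) := by
  simp [birthSeries, series, Multiset.map_map]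

theorem deathSeries_eq_series (k : Multiset (ℝ × ℝ)) :
    deathSeries k = series (k.map fun b ↦ b.1 + b.2) := by
  simp [deathSeries, series, Multiset.map_map]

theorem critSeries_add (k₁ k₂ : Multiset (ℝ × ℝ)) :
    critSeries (k₁ + k₂) = critSeries k₁ + critSeries k₂ := by
  simp only [critSeries, birthSeries, deathSeries, Multiset.map_add, Multiset.sum_add]
  abel

theorem critSeries_apply_of_forall_le {k : Multiset (ℝ × ℝ)} (hk : IsBarcode k) {c : ℝ}
    (hc : ∀ b ∈ k, c ≤ b.1) : critSeries k c = (k.map Prod.fst).count c := by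
  have hdeath : (k.map fun b ↦ b.1 + b.2).count c = 0 := by
    simp only [Multiset.count_eq_zero, Multiset.mem_map, not_exists, not_and]
    exact fun b hb hbc ↦ by linarith [hc b hb, hk b hb]
  rw [critSeries, Finsupp.sub_apply, birthSeries_eq_series, deathSeries_eq_series, series_apply,
    series_apply, hdeath, Nat.cast_zero, sub_zero]

theorem critSeries_filter_lifespan_pos {k : Multiset (ℝ × ℝ)} (hk : ∀ b ∈ k, 0 ≤ b.2) :
    critSeries (k.filter fun b ↦ 0 < b.2) = critSeries k := by
  conv_rhs => rw [← Multiset.filter_add_not (fun b ↦ 0 < b.2) k]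
  rw [critSeries_add, left_eq_add, critSeries, sub_eq_zero, birthSeries_eq_series,
    deathSeries_eq_series]
  refine congrArg series (Multiset.map_congr rfl fun b hb ↦ ?_)
  obtain ⟨hbk, hb⟩ := Multiset.mem_filter.mp hb
  linarith [hk b hbk, not_lt.mp hb]

theorem extPow_eq (f : Multiset (ℝ × ℝ)) (p : ℕ) :
    extPow f p = (Multiset.powersetCard p f).map
      fun s ↦ ((s.map Prod.fst).sum, realMin (s.map Prod.snd)) :=
  rfl

theorem map_fst_extPow (f : Multiset (ℝ × ℝ)) (p : ℕ) :
    (extPow f p).map Prod.fst = powersetCardSums p (f.map Prod.fst) := by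
  simp [extPow_eq, powersetCardSums, Multiset.powersetCard_map, Multiset.map_map]

theorem forall_lifespan_extPow {P : ℝ → Prop} {f : Multiset (ℝ × ℝ)}
    (hf : ∀ b ∈ f, P b.2) {p : ℕ} (hp : 1 ≤ p) : ∀ b ∈ extPow f p, P b.2 := by
  rw [extPow_eq]
  simp only [Multiset.mem_map, forall_exists_index, and_imp, forall_apply_eq_imp_iff₂]
  intro s hs
  have hs0 : s.map Prod.snd ≠ 0 := by
    rw [Ne, Multiset.map_eq_zero]; exact Multiset.ne_zero_of_mem_powersetCard hp hs
  obtain ⟨b, hb, hbmin⟩ := Multiset.mem_map.mp (realMin_mem hs0)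
  exact hbmin ▸ hf b (Multiset.mem_of_le (Multiset.mem_powersetCard.mp hs).1 hb)

theorem IsBarcode.extPow {f : Multiset (ℝ × ℝ)} (hf : IsBarcode f) {p : ℕ} (hp : 1 ≤ p) :
    IsBarcode (extPow f p) :=
  forall_lifespan_extPow hf hp

theorem extPow_filter_lifespan_pos (k : Multiset (ℝ × ℝ)) {p : ℕ} (hp : 1 ≤ p) :
    extPow (k.filter fun b ↦ 0 < b.2) p = (extPow k p).filter fun b ↦ 0 < b.2 := by
  rw [extPow_eq, extPow_eq, Multiset.powersetCard_filter, Multiset.filter_map]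
  congr 1
  refine Multiset.filter_congr fun s hs ↦ ⟨fun h ↦ ?_, fun h b hb ↦ ?_⟩
  · have hs0 : s.map Prod.snd ≠ 0 := by
      rw [Ne, Multiset.map_eq_zero]; exact Multiset.ne_zero_of_mem_powersetCard hp hs
    obtain ⟨b, hb, hbmin⟩ := Multiset.mem_map.mp (realMin_mem hs0)
    exact (hbmin ▸ h b hb : 0 < realMin (s.map Prod.snd))
  · exact h.trans_le (realMin_le (Multiset.mem_map_of_mem _ hb))

theorem map_fst_eq_of_critSeries_extPow_eq {f g : Multiset (ℝ × ℝ)} (hf : IsBarcode f)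
    (hg : IsBarcode g)
    (h : ∀ p : ℕ, 1 ≤ p → critSeries (extPow f p) = critSeries (extPow g p)) :
    f.map Prod.fst = g.map Prod.fst := by
  refine eq_of_count_powersetCardSums_eq fun p hp c hcf hcg ↦ ?_
  have hcount : ∀ k, IsBarcode k → (∀ x ∈ powersetCardSums p (k.map Prod.fst), c ≤ x) →
      critSeries (extPow k p) c = (powersetCardSums p (k.map Prod.fst)).count c := by
    intro k hk hck
    rw [critSeries_apply_of_forall_le (hk.extPow hp), map_fst_extPow]
    rw [← map_fst_extPow] at hck
    exact fun b hb ↦ hck _ (Multiset.mem_map_of_mem _ hb)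
  exact_mod_cast (hcount f hf hcf).symm.trans
    ((congrArg (· c) (h p hp)).trans (hcount g hg hcg))

noncomputable def shiftLifespan (u : ℝ) (k : Multiset (ℝ × ℝ)) : Multiset (ℝ × ℝ) :=
  k.map fun b ↦ (b.1, b.2 - u)

theorem birthSeries_shiftLifespan (u : ℝ) (k : Multiset (ℝ × ℝ)) :
    birthSeries (shiftLifespan u k) = birthSeries k := by
  simp [birthSeries_eq_series, shiftLifespan, Multiset.map_map]

theorem mapDomain_deathSeries_shiftLifespan (u : ℝ) (k : Multiset (ℝ × ℝ)) :
    (deathSeries (shiftLifespan u k)).mapDomain (· + u) = deathSeries k := by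
  rw [deathSeries_eq_series, deathSeries_eq_series, ← series_map, shiftLifespan,
    Multiset.map_map, Multiset.map_map]
  congr 1
  exact Multiset.map_congr rfl fun b _ ↦ by simp only [Function.comp_apply]; ring

theorem extPow_shiftLifespan (u : ℝ) (f : Multiset (ℝ × ℝ)) {p : ℕ} (hp : 1 ≤ p) :
    extPow (shiftLifespan u f) p = shiftLifespan u (extPow f p) := by
  rw [extPow_eq, extPow_eq, shiftLifespan, shiftLifespan, Multiset.powersetCard_map,
    Multiset.map_map, Multiset.map_map]
  refine Multiset.map_congr rfl fun s hs ↦ ?_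
  have hs0 : s.map Prod.snd ≠ 0 := by
    rw [Ne, Multiset.map_eq_zero]; exact Multiset.ne_zero_of_mem_powersetCard hp hs
  simp only [Function.comp_apply, Multiset.map_map, Prod.mk.injEq, true_and]
  rw [← realMin_map_sub hs0, Multiset.map_map]
  rfl

noncomputable def trim (u : ℝ) (f : Multiset (ℝ × ℝ)) : Multiset (ℝ × ℝ) :=
  (shiftLifespan u f).filter fun b ↦ 0 < b.2

theorem isBarcode_trim (u : ℝ) (f : Multiset (ℝ × ℝ)) : IsBarcode (trim u f) :=
  fun _ hb ↦ (Multiset.mem_filter.mp hb).2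

theorem trim_eq_shiftLifespan_filter (u : ℝ) (f : Multiset (ℝ × ℝ)) :
    trim u f = shiftLifespan u (f.filter fun b ↦ u < b.2) := by
  rw [trim, shiftLifespan, Multiset.filter_map, shiftLifespan]
  congr 1
  exact Multiset.filter_congr fun b _ ↦ sub_pos

theorem trim_add (u : ℝ) (f g : Multiset (ℝ × ℝ)) :
    trim u (f + g) = trim u f + trim u g := by
  rw [trim, trim, trim, shiftLifespan, shiftLifespan, shiftLifespan, Multiset.map_add,
    Multiset.filter_add]

theorem card_trim_lt {u : ℝ} {f : Multiset (ℝ × ℝ)} {b : ℝ × ℝ} (hb : b ∈ f)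
    (hbu : b.2 = u) : Multiset.card (trim u f) < Multiset.card f := by
  rw [trim_eq_shiftLifespan_filter, shiftLifespan, Multiset.card_map]
  refine Multiset.card_lt_card (lt_of_le_of_ne (Multiset.filter_le _ f) fun heq ↦ ?_)
  exact (Multiset.filter_eq_self.mp heq b hb).ne' hbu

theorem deathSeries_extPow_eq_mapDomain {u : ℝ} {f : Multiset (ℝ × ℝ)}
    (hu : ∀ b ∈ f, u ≤ b.2) {p : ℕ} (hp : 1 ≤ p) :
    deathSeries (extPow f p) =
      (birthSeries (extPow f p) - critSeries (extPow (trim u f) p)).mapDomain (· + u) := by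
  have hshift : ∀ b ∈ shiftLifespan u f, 0 ≤ b.2 := fun b hb ↦ by
    obtain ⟨b', hb', rfl⟩ := Multiset.mem_map.mp hb
    exact sub_nonneg.mpr (hu b' hb')
  rw [trim, extPow_filter_lifespan_pos _ hp,
    critSeries_filter_lifespan_pos (forall_lifespan_extPow hshift hp),
    extPow_shiftLifespan u f hp, critSeries, birthSeries_shiftLifespan, sub_sub_cancel,
    mapDomain_deathSeries_shiftLifespan]

theorem critSeries_extPow_trim_eq {u : ℝ} {f g : Multiset (ℝ × ℝ)}
    (huf : ∀ b ∈ f, u ≤ b.2) (hug : ∀ b ∈ g, u ≤ b.2)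
    (hfst : f.map Prod.fst = g.map Prod.fst) {p : ℕ} (hp : 1 ≤ p)
    (h : critSeries (extPow f p) = critSeries (extPow g p)) :
    critSeries (extPow (trim u f) p) = critSeries (extPow (trim u g) p) := by
  have hbirth : birthSeries (extPow f p) = birthSeries (extPow g p) := by
    rw [birthSeries_eq_series, birthSeries_eq_series, map_fst_extPow, map_fst_extPow, hfst]
  have hdeath : deathSeries (extPow f p) = deathSeries (extPow g p) := by
    simpa only [critSeries, hbirth, sub_right_inj] using h
  rw [deathSeries_extPow_eq_mapDomain huf hp, deathSeries_extPow_eq_mapDomain hug hp,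
    hbirth] at hdeath
  exact sub_right_injective (Finsupp.mapDomain_injective (add_left_injective u) hdeath)

theorem eq_of_trim_eq {u : ℝ} {f g : Multiset (ℝ × ℝ)} (huf : ∀ b ∈ f, u ≤ b.2)
    (hug : ∀ b ∈ g, u ≤ b.2) (hfst : f.map Prod.fst = g.map Prod.fst)
    (htrim : trim u f = trim u g) : f = g := by
  have hshift : Function.Injective fun b : ℝ × ℝ ↦ (b.1, b.2 - u) :=
    fun b c hbc ↦ by simpa [Prod.ext_iff] using hbc
  have hlong : f.filter (fun b ↦ u < b.2) = g.filter (fun b ↦ u < b.2) := by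
    rw [trim_eq_shiftLifespan_filter, trim_eq_shiftLifespan_filter] at htrim
    exact Multiset.map_injective hshift htrim
  -- the bars of lifespan exactly `u` are recovered from their birth grades
  have hshort : ∀ k : Multiset (ℝ × ℝ), (∀ b ∈ k, u ≤ b.2) →
      k.filter (fun b ↦ ¬u < b.2) =
        ((k.filter fun b ↦ ¬u < b.2).map Prod.fst).map (·, u) := by
    intro k hk
    rw [Multiset.map_map]
    refine (Multiset.map_congr rfl fun b hb ↦ ?_).trans (Multiset.map_id _) |>.symm
    obtain ⟨hbk, hb⟩ := Multiset.mem_filter.mp hb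
    exact Prod.ext rfl (le_antisymm (not_lt.mp hb) (hk b hbk)).symm
  have hshort_fst : (f.filter fun b ↦ ¬u < b.2).map Prod.fst =
      (g.filter fun b ↦ ¬u < b.2).map Prod.fst := by
    rw [← Multiset.filter_add_not (fun b ↦ u < b.2) f,
      ← Multiset.filter_add_not (fun b ↦ u < b.2) g, Multiset.map_add, Multiset.map_add,
      hlong] at hfst
    exact add_left_cancel hfst
  rw [← Multiset.filter_add_not (fun b ↦ u < b.2) f,
    ← Multiset.filter_add_not (fun b ↦ u < b.2) g, hlong, hshort f huf, hshort g hug,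
    hshort_fst]

/-- the exterior critical series is a complete invariant of barcodes. -/
theorem exteriorCriticalSeries_injective
    (f g : Multiset (ℝ × ℝ)) (hf : IsBarcode f) (hg : IsBarcode g)
    (h : ∀ p : ℕ, 1 ≤ p → critSeries (extPow f p) = critSeries (extPow g p)) :
    f = g := by
  induction hn : Multiset.card (f + g) using Nat.strong_induction_on generalizing f g with
  | _ n ih =>
  rcases eq_or_ne (f + g) 0 with hfg | hfg
  · obtain ⟨rfl, rfl⟩ := add_eq_zero.mp hfg
    rfl
  set u := realMin ((f + g).map Prod.snd)
  have hu : ∀ b ∈ f + g, u ≤ b.2 := fun b hb ↦ realMin_le (Multiset.mem_map_of_mem _ hb)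
  have huf : ∀ b ∈ f, u ≤ b.2 := fun b hb ↦ hu b (Multiset.mem_add.mpr (.inl hb))
  have hug : ∀ b ∈ g, u ≤ b.2 := fun b hb ↦ hu b (Multiset.mem_add.mpr (.inr hb))
  obtain ⟨b, hb, hbu⟩ := Multiset.mem_map.mp
    (realMin_mem (m := (f + g).map Prod.snd) (by rwa [Ne, Multiset.map_eq_zero]))
  have hfst := map_fst_eq_of_critSeries_extPow_eq hf hg h
  have hlt : Multiset.card (trim u f + trim u g) < n :=
    hn ▸ trim_add u f g ▸ card_trim_lt hb hbu
  have htrim : trim u f = trim u g := ih _ hlt _ _ (isBarcode_trim u f) (isBarcode_trim u g)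
    (fun p hp ↦ critSeries_extPow_trim_eq huf hug hfst hp (h p hp)) rfl
  exact eq_of_trim_eq huf hug hfst htrim
end

section
/- If f is a nonempty barcode and n = Multiset.card f, then C(f^∧n) ≠ 0, while for every integer p > n the barcode f^∧p is empty and hence C(f^∧p) = 0. Consequently the number of bars of f is the largest integer n with C(f^∧n) ≠ 0, so it is determined by the exterior critical series of f. -/
lemma aux_powersetCard_self {α : Type*} (s : Multiset α) :
    Multiset.powersetCard (Multiset.card s) s = {s} := by
  have h1 : Multiset.card (Multiset.powersetCard (Multiset.card s) s) = 1 := by simp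
  obtain ⟨t, ht⟩ := Multiset.card_eq_one.mp h1
  have hs : s ∈ Multiset.powersetCard (Multiset.card s) s := by
    rw [Multiset.mem_powersetCard]; exact ⟨le_refl _, rfl⟩
  rw [ht] at hs ⊢
  simp at hs; rw [hs]

/-- the number of bars is the largest `n` with `C(f^∧n) ≠ 0`. -/
theorem card_eq_largest_nonzero_extCrit
    (f : Multiset (ℝ × ℝ)) (hf : IsBarcode f) (hne : f ≠ 0)
    (n : ℕ) (hn : n = Multiset.card f) :
    critSeries (extPow f n) ≠ 0 ∧
      ∀ p : ℕ, n < p → extPow f p = 0 ∧ critSeries (extPow f p) = 0 := by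
  constructor
  · -- extPow f n = {(drift, sInf lifespans)}
    have hps : extPow f n = {((f.map Prod.fst).sum, sInf {x : ℝ | x ∈ f.map Prod.snd})} := by
      rw [extPow, hn, aux_powersetCard_self]
      simp
    set ℓ := sInf {x : ℝ | x ∈ f.map Prod.snd} with hℓ
    have hSfin : ({x : ℝ | x ∈ f.map Prod.snd}).Finite := by
      have : {x : ℝ | x ∈ f.map Prod.snd} = ↑(f.map Prod.snd).toFinset := by
        ext x; simp
      rw [this]; exact Finset.finite_toSet _
    have hSne : ({x : ℝ | x ∈ f.map Prod.snd}).Nonempty := by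
      obtain ⟨b, hb⟩ := Multiset.exists_mem_of_ne_zero hne
      exact ⟨b.2, by simp only [Set.mem_setOf_eq, Multiset.mem_map]; exact ⟨b, hb, rfl⟩⟩
    have hmem : ℓ ∈ {x : ℝ | x ∈ f.map Prod.snd} := hSne.csInf_mem hSfin
    have hℓpos : 0 < ℓ := by
      simp only [Set.mem_setOf_eq, Multiset.mem_map] at hmem
      obtain ⟨b, hb, hb2⟩ := hmem
      exact hb2 ▸ hf b hb
    rw [hps]
    intro hC
    have h0 := DFunLike.congr_fun hC ((f.map Prod.fst).sum)
    simp [critSeries, birthSeries, deathSeries, Finsupp.single_apply,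
      (by linarith : (f.map Prod.fst).sum + ℓ ≠ (f.map Prod.fst).sum)] at h0
  · intro p hp
    have hz : extPow f p = 0 := by
      rw [extPow, Multiset.powersetCard_eq_empty p (hn ▸ hp)]
      rfl
    exact ⟨hz, by rw [hz]; simp [critSeries, birthSeries, deathSeries]⟩
end

section
/- If f and g are barcodes with C(f^∧p) = C(g^∧p) for every integer p ≥ 1, then L(f) = L(g); equivalently, the multiset of lifespans of f equals the multiset of lifespans of g. In other words, the lifespan series of a barcode is determined by its exterior critical series. -/
open Multiset in
/-- Sum over all `p`-element sub-multisets of `L` of their minimum. -/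
noncomputable def Sfun (p : ℕ) (L : Multiset ℝ) : ℝ :=
  ((Multiset.powersetCard p L).map (fun t => sInf {x : ℝ | x ∈ t})).sum

/-- The moment as an additive hom. -/
noncomputable def momentHom : (ℝ →₀ ℤ) →+ ℝ :=
  Finsupp.liftAddHom (fun β : ℝ => zmultiplesHom ℝ β)

lemma momentHom_sum_single (h : Multiset (ℝ × ℝ)) (φ : ℝ × ℝ → ℝ) :
    momentHom ((h.map (fun b => Finsupp.single (φ b) (1 : ℤ))).sum) = (h.map φ).sum := by
  rw [map_multiset_sum, Multiset.map_map]
  congr 1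
  apply Multiset.map_congr rfl
  intro b _
  simp [momentHom, Finsupp.liftAddHom_apply_single]

lemma momentHom_crit (h : Multiset (ℝ × ℝ)) :
    momentHom (critSeries h) = -(h.map Prod.snd).sum := by
  rw [critSeries, map_sub, birthSeries, deathSeries,
    momentHom_sum_single h Prod.fst, momentHom_sum_single h (fun b => b.1 + b.2)]
  have : (h.map (fun b => b.1 + b.2)).sum = (h.map Prod.fst).sum + (h.map Prod.snd).sum := by
    induction h using Multiset.induction with
    | empty => simp
    | cons a s ih => simp [ih]; ring
  rw [this]; ring

lemma Sfun_extPow (f : Multiset (ℝ × ℝ)) (p : ℕ) :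
    ((extPow f p).map Prod.snd).sum = Sfun p (f.map Prod.snd) := by
  rw [extPow, Multiset.map_map, Sfun, Multiset.powersetCard_map, Multiset.map_map]
  rfl

lemma sInf_mem_of_mem_powersetCard {p : ℕ} (hp : 1 ≤ p) {L t : Multiset ℝ}
    (ht : t ∈ Multiset.powersetCard p L) :
    sInf {x : ℝ | x ∈ t} ∈ t ∧ ∀ y ∈ t, y ∈ L := by
  rw [Multiset.mem_powersetCard] at ht
  have hne : {x : ℝ | x ∈ t}.Nonempty := by
    rcases Multiset.card_pos_iff_exists_mem.mp (by omega : 0 < Multiset.card t) with ⟨x, hx⟩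
    exact ⟨x, hx⟩
  exact ⟨hne.csInf_mem t.finite_toSet, fun y hy => Multiset.mem_of_le ht.1 hy⟩

lemma Sfun_pos {L : Multiset ℝ} (hL : ∀ x ∈ L, (0:ℝ) < x) {p : ℕ}
    (hp : 1 ≤ p) (hpc : p ≤ Multiset.card L) : 0 < Sfun p L := by
  have hne : Multiset.powersetCard p L ≠ 0 := by
    intro h0
    have := Multiset.card_powersetCard p L
    rw [h0] at this
    simp only [Multiset.card_zero] at this
    have := Nat.choose_pos hpc
    omega
  have hpos : ∀ x ∈ (Multiset.powersetCard p L).map (fun t => sInf {x : ℝ | x ∈ t}), (0:ℝ) < x := by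
    intro x hx
    obtain ⟨t, ht, rfl⟩ := Multiset.mem_map.mp hx
    obtain ⟨hmem, hsub⟩ := sInf_mem_of_mem_powersetCard hp ht
    exact hL _ (hsub _ hmem)
  obtain ⟨t0, ht0⟩ := Multiset.exists_mem_of_ne_zero hne
  obtain ⟨s, hs⟩ := Multiset.exists_cons_of_mem
    (Multiset.mem_map_of_mem (fun t => sInf {x : ℝ | x ∈ t}) ht0)
  rw [Sfun, hs, Multiset.sum_cons]
  have h1 : (0:ℝ) < sInf {x : ℝ | x ∈ t0} :=
    hpos _ (Multiset.mem_map_of_mem _ ht0)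
  have h2 : (0:ℝ) ≤ s.sum :=
    Multiset.sum_nonneg (fun x hx => le_of_lt (hpos x (by rw [hs]; exact Multiset.mem_cons_of_mem hx)))
  linarith

lemma powersetCard_card_self (s : Multiset ℝ) :
    Multiset.powersetCard (Multiset.card s) s = {s} := by
  have hc : Multiset.card (Multiset.powersetCard (Multiset.card s) s) = 1 := by
    rw [Multiset.card_powersetCard, Nat.choose_self]
  obtain ⟨t, ht⟩ := Multiset.card_eq_one.mp hc
  have htm : t ∈ Multiset.powersetCard (Multiset.card s) s := by
    rw [ht]; exact Multiset.mem_singleton_self t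
  rw [Multiset.mem_powersetCard] at htm
  rw [ht, Multiset.eq_of_le_of_card_le htm.1 (le_of_eq htm.2.symm)]

lemma Sfun_card_eq {L M : Multiset ℝ} (hL : ∀ x ∈ L, (0:ℝ) < x) (hM : ∀ x ∈ M, (0:ℝ) < x)
    (hS : ∀ p : ℕ, 1 ≤ p → Sfun p L = Sfun p M) :
    Multiset.card L = Multiset.card M := by
  by_contra hne
  wlog hlt : Multiset.card L < Multiset.card M generalizing L M
  · exact this hM hL (fun p hp => (hS p hp).symm) (Ne.symm hne) (by omega)
  have h1 : Sfun (Multiset.card M) L = 0 := by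
    rw [Sfun, Multiset.powersetCard_eq_empty _ hlt]; simp
  have h2 : 0 < Sfun (Multiset.card M) M := Sfun_pos hM (by omega) le_rfl
  rw [hS _ (by omega)] at h1
  linarith

lemma Sfun_cons {a : ℝ} {L : Multiset ℝ} (ha : ∀ x ∈ L, a ≤ x) {q : ℕ} :
    Sfun (q + 1) (a ::ₘ L) = Sfun (q + 1) L + ((Multiset.card L).choose q : ℝ) * a := by
  rw [Sfun, Multiset.powersetCard_cons, Multiset.map_add, Multiset.sum_add, Multiset.map_map]
  congr 1
  have : ∀ t ∈ Multiset.powersetCard q L,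
      ((fun t => sInf {x : ℝ | x ∈ t}) ∘ Multiset.cons a) t = a := by
    intro t ht
    rw [Multiset.mem_powersetCard] at ht
    apply IsLeast.csInf_eq
    constructor
    · exact Multiset.mem_cons_self a t
    · intro x hx
      rcases Multiset.mem_cons.mp hx with rfl | hx
      · exact le_rfl
      · exact ha x (Multiset.mem_of_le ht.1 hx)
  rw [Multiset.map_congr rfl this, Multiset.map_const', Multiset.sum_replicate,
    Multiset.card_powersetCard, nsmul_eq_mul]

lemma Sfun_key (n : ℕ) : ∀ (L M : Multiset ℝ), Multiset.card L = n → Multiset.card M = n →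
    (∀ x ∈ L, (0:ℝ) < x) → (∀ x ∈ M, (0:ℝ) < x) →
    (∀ p : ℕ, 1 ≤ p → Sfun p L = Sfun p M) → L = M := by
  induction n with
  | zero =>
    intro L M hcL hcM _ _ _
    rw [Multiset.card_eq_zero.mp hcL, Multiset.card_eq_zero.mp hcM]
  | succ n ih =>
    intro L M hcL hcM hL hM hS
    have hLne : {x : ℝ | x ∈ L}.Nonempty := by
      rcases Multiset.card_pos_iff_exists_mem.mp (by omega : 0 < Multiset.card L) with ⟨x, hx⟩
      exact ⟨x, hx⟩
    have hMne : {x : ℝ | x ∈ M}.Nonempty := by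
      rcases Multiset.card_pos_iff_exists_mem.mp (by omega : 0 < Multiset.card M) with ⟨x, hx⟩
      exact ⟨x, hx⟩
    have hSfL : Sfun (n + 1) L = sInf {x : ℝ | x ∈ L} := by
      rw [Sfun, ← hcL, powersetCard_card_self]; simp
    have hSfM : Sfun (n + 1) M = sInf {x : ℝ | x ∈ M} := by
      rw [Sfun, ← hcM, powersetCard_card_self]; simp
    have hinf : sInf {x : ℝ | x ∈ L} = sInf {x : ℝ | x ∈ M} := by
      rw [← hSfL, ← hSfM]; exact hS (n + 1) (by omega)
    set a := sInf {x : ℝ | x ∈ L} with ha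
    have haL : a ∈ L := hLne.csInf_mem L.finite_toSet
    have haM : a ∈ M := by rw [hinf]; exact hMne.csInf_mem M.finite_toSet
    have haleL : ∀ x ∈ L, a ≤ x := fun x hx =>
      csInf_le (L.finite_toSet.bddBelow) hx
    have haleM : ∀ x ∈ M, a ≤ x := fun x hx => by
      rw [hinf]; exact csInf_le (M.finite_toSet.bddBelow) hx
    have hLc : L = a ::ₘ L.erase a := (Multiset.cons_erase haL).symm
    have hMc : M = a ::ₘ M.erase a := (Multiset.cons_erase haM).symm
    have hcL' : Multiset.card (L.erase a) = n := by
      rw [Multiset.card_erase_of_mem haL, hcL]; rfl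
    have hcM' : Multiset.card (M.erase a) = n := by
      rw [Multiset.card_erase_of_mem haM, hcM]; rfl
    have hS' : ∀ p : ℕ, 1 ≤ p → Sfun p (L.erase a) = Sfun p (M.erase a) := by
      intro p hp
      obtain ⟨q, rfl⟩ : ∃ q, p = q + 1 := ⟨p - 1, by omega⟩
      have h1 := Sfun_cons (L := L.erase a) (a := a)
        (fun x hx => haleL x (Multiset.mem_of_mem_erase hx)) (q := q)
      have h2 := Sfun_cons (L := M.erase a) (a := a)
        (fun x hx => haleM x (Multiset.mem_of_mem_erase hx)) (q := q)
      rw [← hLc] at h1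
      rw [← hMc] at h2
      have := hS (q + 1) (by omega)
      rw [h1, h2, hcL', hcM'] at this
      linarith
    have := ih (L.erase a) (M.erase a) hcL' hcM'
      (fun x hx => hL x (Multiset.mem_of_mem_erase hx))
      (fun x hx => hM x (Multiset.mem_of_mem_erase hx)) hS'
    rw [hLc, hMc, this]

/-- the lifespan series is determined by the exterior critical series. -/
theorem lifespanSeries_determined_by_extCrit
    (f g : Multiset (ℝ × ℝ)) (hf : IsBarcode f) (hg : IsBarcode g)
    (h : ∀ p : ℕ, 1 ≤ p → critSeries (extPow f p) = critSeries (extPow g p)) :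
    lifespanSeries f = lifespanSeries g ∧ f.map Prod.snd = g.map Prod.snd := by
  have hL : ∀ x ∈ f.map Prod.snd, (0:ℝ) < x := by
    intro x hx; obtain ⟨b, hb, rfl⟩ := Multiset.mem_map.mp hx; exact hf b hb
  have hM : ∀ x ∈ g.map Prod.snd, (0:ℝ) < x := by
    intro x hx; obtain ⟨b, hb, rfl⟩ := Multiset.mem_map.mp hx; exact hg b hb
  have hS : ∀ p : ℕ, 1 ≤ p → Sfun p (f.map Prod.snd) = Sfun p (g.map Prod.snd) := by
    intro p hp
    have := congrArg momentHom (h p hp)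
    rw [momentHom_crit, momentHom_crit, Sfun_extPow, Sfun_extPow] at this
    linarith
  have hmap : f.map Prod.snd = g.map Prod.snd := by
    have hcard : Multiset.card (f.map Prod.snd) = Multiset.card (g.map Prod.snd) :=
      Sfun_card_eq hL hM hS
    exact Sfun_key _ _ _ rfl hcard.symm hL hM hS
  refine ⟨?_, hmap⟩
  have : ∀ (f : Multiset (ℝ × ℝ)), lifespanSeries f
      = ((f.map Prod.snd).map (fun x => Finsupp.single x (1:ℤ))).sum := by
    intro f; rw [lifespanSeries, Multiset.map_map]; rfl
  rw [this, this, hmap]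
end

section
/- Fix ℓ > 0. If f and g are barcodes in which every bar has lifespan exactly ℓ, and C(f) = C(g), then f = g. That is, the map f ↦ C(f) is one-to-one on the set of barcodes all of whose bars have a fixed lifespan ℓ. -/
noncomputable def auxS (ℓ : ℝ) (M : Multiset ℝ) : ℝ →₀ ℤ :=
  (M.map (fun α => Finsupp.single α 1 - Finsupp.single (α + ℓ) 1)).sum

lemma auxS_cons (ℓ α : ℝ) (M : Multiset ℝ) :
    auxS ℓ (α ::ₘ M) = (Finsupp.single α 1 - Finsupp.single (α + ℓ) 1) + auxS ℓ M := by
  simp [auxS]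

lemma auxS_apply_min (ℓ : ℝ) (hℓ : 0 < ℓ) (M : Multiset ℝ) (β : ℝ)
    (hmin : ∀ α ∈ M, β ≤ α) : auxS ℓ M β = (M.count β : ℤ) := by
  induction M using Multiset.induction with
  | empty => simp [auxS]
  | cons a t ih =>
    rw [auxS_cons]
    have hβa : β ≤ a := hmin a (Multiset.mem_cons_self ..)
    have hne : ¬ (a + ℓ = β) := by linarith
    have := ih (fun α hα => hmin α (Multiset.mem_cons_of_mem hα))
    simp only [Finsupp.add_apply, Finsupp.sub_apply, Finsupp.single_apply, this,
      Multiset.count_cons, hne, if_false]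
    rcases eq_or_ne a β with h | h
    · subst h; simp; ring
    · simp [h, Ne.symm h]

lemma auxS_inj (ℓ : ℝ) (hℓ : 0 < ℓ) :
    ∀ n (M N : Multiset ℝ), M.card + N.card = n → auxS ℓ M = auxS ℓ N → M = N := by
  intro n
  induction n using Nat.strong_induction_on with
  | _ n ih =>
    intro M N hcard hS
    by_cases h0 : M + N = 0
    · rw [_root_.add_eq_zero] at h0
      rw [h0.1, h0.2]
    · have hne : (M + N).toFinset.Nonempty := by
        rw [Multiset.toFinset_nonempty]
        exact h0
      set β := (M + N).toFinset.min' hne with hβ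
      have hβmem : β ∈ M + N := Multiset.mem_toFinset.mp (Finset.min'_mem _ hne)
      have hmin : ∀ α ∈ M + N, β ≤ α := fun α hα =>
        Finset.min'_le _ _ (Multiset.mem_toFinset.mpr hα)
      have hM : auxS ℓ M β = (M.count β : ℤ) :=
        auxS_apply_min ℓ hℓ M β (fun α hα => hmin α (Multiset.mem_add.mpr (Or.inl hα)))
      have hN : auxS ℓ N β = (N.count β : ℤ) :=
        auxS_apply_min ℓ hℓ N β (fun α hα => hmin α (Multiset.mem_add.mpr (Or.inr hα)))
      have hcount : M.count β = N.count β := by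
        have : auxS ℓ M β = auxS ℓ N β := by rw [hS]
        rw [hM, hN] at this
        exact_mod_cast this
      have hpos : 0 < M.count β + N.count β := by
        have := Multiset.count_pos.mpr hβmem
        rwa [Multiset.count_add] at this
      have hβM : β ∈ M := by
        rw [← Multiset.count_pos]
        omega
      have hβN : β ∈ N := by
        rw [← Multiset.count_pos]
        omega
      have hMe : β ::ₘ M.erase β = M := Multiset.cons_erase hβM
      have hNe : β ::ₘ N.erase β = N := Multiset.cons_erase hβN
      have hS' : auxS ℓ (M.erase β) = auxS ℓ (N.erase β) := by
        have : auxS ℓ (β ::ₘ M.erase β) = auxS ℓ (β ::ₘ N.erase β) := by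
          rw [hMe, hNe, hS]
        rw [auxS_cons, auxS_cons] at this
        exact add_left_cancel this
      have hcard' : (M.erase β).card + (N.erase β).card < n := by
        have h1 : (M.erase β).card + 1 = M.card := by
          rw [← hMe]; simp
        have h2 : (N.erase β).card + 1 = N.card := by
          rw [← hNe]; simp
        omega
      have := ih _ hcard' (M.erase β) (N.erase β) rfl hS'
      rw [← hMe, ← hNe, this]

lemma critSeries_eq_auxS (ℓ : ℝ) (f : Multiset (ℝ × ℝ)) (hf : ∀ b ∈ f, b.2 = ℓ) :
    critSeries f = auxS ℓ (f.map Prod.fst) := by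
  unfold critSeries birthSeries deathSeries auxS
  rw [Multiset.map_map]
  induction f using Multiset.induction with
  | empty => simp
  | cons a t ih =>
    have ht := ih (fun b hb => hf b (Multiset.mem_cons_of_mem hb))
    simp only [Multiset.map_cons, Multiset.sum_cons, Function.comp] at ht ⊢
    rw [hf a (Multiset.mem_cons_self ..), ← ht]
    abel

/-- `f ↦ C(f)` is one-to-one on barcodes whose bars all have lifespan `ℓ`. -/
theorem critSeries_injective_single_lifespan (ℓ : ℝ) (hℓ : 0 < ℓ)
    (f g : Multiset (ℝ × ℝ))
    (hf : ∀ b ∈ f, b.2 = ℓ) (hg : ∀ b ∈ g, b.2 = ℓ)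
    (h : critSeries f = critSeries g) :
    f = g := by
  have hS : auxS ℓ (f.map Prod.fst) = auxS ℓ (g.map Prod.fst) := by
    rw [← critSeries_eq_auxS ℓ f hf, ← critSeries_eq_auxS ℓ g hg, h]
  have hMN : f.map Prod.fst = g.map Prod.fst :=
    auxS_inj ℓ hℓ _ _ _ rfl hS
  have hfeq : f = f.map (fun b => (b.1, ℓ)) := by
    conv_lhs => rw [← Multiset.map_id f]
    exact Multiset.map_congr rfl fun b hb => by
      simp only [id]; rw [← hf b hb]
  have hgeq : g = g.map (fun b => (b.1, ℓ)) := by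
    conv_lhs => rw [← Multiset.map_id g]
    exact Multiset.map_congr rfl fun b hb => by
      simp only [id]; rw [← hg b hb]
  have key : ∀ h : Multiset (ℝ × ℝ),
      h.map (fun b => (b.1, ℓ)) = (h.map Prod.fst).map (fun α => (α, ℓ)) := fun h => by
    rw [Multiset.map_map]; rfl
  rw [hfeq, hgeq, key f, key g, hMN]
end

section
/- Fix ℓ > 0 and ℓ̃ > 0 with ℓ ≠ ℓ̃, and fix δ ∈ ℝ. Suppose f and g are barcodes each of which consists of exactly one bar with lifespan ℓ̃ together with finitely many bars all of lifespan ℓ (that is, f = {(α̃, ℓ̃)} + f₀ and g = {(β̃, ℓ̃)} + g₀ where every bar of f₀ and of g₀ has lifespan ℓ), and suppose Δ(f) = Δ(g) = δ. If C(f) = C(g), then f = g. That is, the map f ↦ C(f) is one-to-one on the set of such barcodes with fixed drift δ. -/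
noncomputable section AuxBar

/-- Auxiliary: the additive hom sending `P` to `Σ_β P(β)·c(β)`. -/
noncomputable def mapMoment (c : ℝ → ℝ) : (ℝ →₀ ℤ) →+ ℝ :=
  Finsupp.liftAddHom fun β => zmultiplesHom ℝ (c β)

lemma mapMoment_single (c : ℝ → ℝ) (a : ℝ) (n : ℤ) :
    mapMoment c (Finsupp.single a n) = (n : ℝ) * c a := by
  simp [mapMoment, zsmul_eq_mul]

lemma mapMoment_series (c : ℝ → ℝ) (d : ℝ × ℝ → ℝ) (f : Multiset (ℝ × ℝ)) :
    mapMoment c ((f.map (fun b => Finsupp.single (d b) (1 : ℤ))).sum)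
      = (f.map (fun b => c (d b))).sum := by
  rw [map_multiset_sum, Multiset.map_map]
  congr 1
  apply Multiset.map_congr rfl
  intro b _
  simp [mapMoment_single]

lemma mapMoment_crit (c : ℝ → ℝ) (f : Multiset (ℝ × ℝ)) :
    mapMoment c (critSeries f)
      = (f.map (fun b => c b.1)).sum - (f.map (fun b => c (b.1 + b.2))).sum := by
  unfold critSeries birthSeries deathSeries
  rw [map_sub, mapMoment_series c (fun b => b.1) f, mapMoment_series c (fun b => b.1 + b.2) f]

lemma series_apply_s6 (s : Multiset ℝ) (x : ℝ) :
    ((s.map (fun a => Finsupp.single a (1 : ℤ))).sum) x = s.count x := by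
  induction s using Multiset.induction with
  | empty => simp
  | cons a s ih =>
      simp [Multiset.count_cons, ih, Finsupp.single_apply, eq_comm, add_comm]

lemma sum_shift (ℓ : ℝ) (A : Multiset ℝ) :
    (A.map (fun a => a + ℓ)).sum = A.sum + (Multiset.card A) * ℓ := by
  induction A using Multiset.induction with
  | empty => simp
  | cons a s ih => simp [ih]; ring

lemma sum_shift_sq (ℓ : ℝ) (A : Multiset ℝ) :
    (A.map (fun a => (a + ℓ) ^ 2)).sum
      = (A.map (fun a => a ^ 2)).sum + 2 * ℓ * A.sum + (Multiset.card A) * ℓ ^ 2 := by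
  induction A using Multiset.induction with
  | empty => simp
  | cons a s ih => simp [ih]; ring

lemma shift_invariant_eq_zero (ℓ : ℝ) (hℓ : 0 < ℓ) (P : ℝ →₀ ℤ)
    (H : ∀ x, P (x + ℓ) = P x) : P = 0 := by
  by_contra hP
  have hs : P.support.Nonempty := Finsupp.support_nonempty_iff.mpr hP
  set β := P.support.max' hs with hβdef
  have hβ : P β ≠ 0 := Finsupp.mem_support_iff.mp (P.support.max'_mem hs)
  have h2 : P (β + ℓ) ≠ 0 := by rw [H]; exact hβ
  have hmem : β + ℓ ∈ P.support := Finsupp.mem_support_iff.mpr h2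
  have := Finset.le_max' _ _ hmem
  rw [← hβdef] at this
  linarith

lemma critSeries_cons (a l : ℝ) (f₀ : Multiset (ℝ × ℝ)) :
    critSeries ((a, l) ::ₘ f₀)
      = (Finsupp.single a (1 : ℤ) - Finsupp.single (a + l) 1) + critSeries f₀ := by
  unfold critSeries birthSeries deathSeries
  rw [Multiset.map_cons, Multiset.sum_cons, Multiset.map_cons, Multiset.sum_cons]
  abel

end AuxBar

/-- `f ↦ C(f)` is one-to-one on barcodes with one outlier bar of lifespan
`ℓ̃`, all other bars of lifespan `ℓ ≠ ℓ̃`, and fixed drift `δ`. -/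
theorem critSeries_injective_two_lifespans
    (ℓ ℓt : ℝ) (hℓ : 0 < ℓ) (hℓt : 0 < ℓt) (hℓne : ℓ ≠ ℓt) (δ : ℝ)
    (f g : Multiset (ℝ × ℝ)) (αt βt : ℝ) (f₀ g₀ : Multiset (ℝ × ℝ))
    (hf : f = (αt, ℓt) ::ₘ f₀) (hg : g = (βt, ℓt) ::ₘ g₀)
    (hf₀ : ∀ b ∈ f₀, b.2 = ℓ) (hg₀ : ∀ b ∈ g₀, b.2 = ℓ)
    (hΔf : drift f = δ) (hΔg : drift g = δ)
    (h : critSeries f = critSeries g) :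
    f = g := by
  classical
  set A : Multiset ℝ := f₀.map Prod.fst with hA
  set B : Multiset ℝ := g₀.map Prod.fst with hB
  -- death grades of f₀ are births shifted by ℓ
  have hfd : f₀.map (fun b => b.1 + b.2) = A.map (fun a => a + ℓ) := by
    rw [hA, Multiset.map_map]
    exact Multiset.map_congr rfl (fun b hb => by simp [hf₀ b hb])
  have hgd : g₀.map (fun b => b.1 + b.2) = B.map (fun a => a + ℓ) := by
    rw [hB, Multiset.map_map]
    exact Multiset.map_congr rfl (fun b hb => by simp [hg₀ b hb])
  have hAf : f₀.map (fun b => b.1) = A := rfl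
  have hBg : g₀.map (fun b => b.1) = B := rfl
  -- drifts
  have hdf : αt + A.sum = δ := by
    rw [← hΔf, hf, drift, Multiset.map_cons, Multiset.sum_cons, hA]
  have hdg : βt + B.sum = δ := by
    rw [← hΔg, hg, drift, Multiset.map_cons, Multiset.sum_cons, hB]
  -- first moment
  have h1 := congrArg (mapMoment (fun x => x)) h
  rw [mapMoment_crit, mapMoment_crit, hf, hg] at h1
  simp only [Multiset.map_cons, Multiset.sum_cons] at h1
  rw [hAf, hBg, hfd, hgd, sum_shift, sum_shift] at h1
  have hcard : (Multiset.card A : ℝ) * ℓ = (Multiset.card B : ℝ) * ℓ := by linarith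
  -- second moment
  have h2 := congrArg (mapMoment (fun x => x ^ 2)) h
  rw [mapMoment_crit, mapMoment_crit, hf, hg] at h2
  simp only [Multiset.map_cons, Multiset.sum_cons] at h2
  rw [show (f₀.map (fun b => b.1 ^ 2)) = A.map (fun a => a ^ 2) by
        rw [hA, Multiset.map_map]; rfl,
      show (g₀.map (fun b => b.1 ^ 2)) = B.map (fun a => a ^ 2) by
        rw [hB, Multiset.map_map]; rfl,
      show (f₀.map (fun b => (b.1 + b.2) ^ 2)) = (A.map (fun a => a + ℓ)).map (fun a => a ^ 2) by
        rw [← hfd, Multiset.map_map]; rfl,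
      show (g₀.map (fun b => (b.1 + b.2) ^ 2)) = (B.map (fun a => a + ℓ)).map (fun a => a ^ 2) by
        rw [← hgd, Multiset.map_map]; rfl] at h2
  rw [show (A.map (fun a => a + ℓ)).map (fun a => a ^ 2) = A.map (fun a => (a + ℓ) ^ 2) by
        rw [Multiset.map_map]; rfl,
      show (B.map (fun a => a + ℓ)).map (fun a => a ^ 2) = B.map (fun a => (a + ℓ) ^ 2) by
        rw [Multiset.map_map]; rfl, sum_shift_sq, sum_shift_sq] at h2
  -- deduce αt = βt
  have hαβ : αt = βt := by
    have hsum : A.sum = δ - αt := by linarith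
    have hsum' : B.sum = δ - βt := by linarith
    have hc : ((Multiset.card A : ℝ)) = (Multiset.card B : ℝ) :=
      mul_right_cancel₀ (ne_of_gt hℓ) hcard
    rw [hsum, hsum', hc] at h2
    have hz : 2 * (ℓ - ℓt) * (αt - βt) = 0 := by linear_combination h2
    have hne : (2 : ℝ) * (ℓ - ℓt) ≠ 0 := by
      have : ℓ - ℓt ≠ 0 := sub_ne_zero.mpr hℓne
      positivity
    have := (mul_eq_zero.mp hz).resolve_left hne
    linarith [sub_eq_zero.mp this]
  -- cancel the outlier bar in the critical series
  have hC0 : critSeries f₀ = critSeries g₀ := by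
    rw [hf, hg, critSeries_cons, critSeries_cons, hαβ] at h
    exact add_left_cancel h
  -- pointwise equation
  have hbfA : ∀ x, birthSeries f₀ x = (A.count x : ℤ) := by
    intro x
    rw [birthSeries, show f₀.map (fun b => Finsupp.single b.1 (1 : ℤ))
          = A.map (fun a => Finsupp.single a (1 : ℤ)) by rw [hA, Multiset.map_map]; rfl]
    exact series_apply_s6 A x
  have hbgB : ∀ x, birthSeries g₀ x = (B.count x : ℤ) := by
    intro x
    rw [birthSeries, show g₀.map (fun b => Finsupp.single b.1 (1 : ℤ))
          = B.map (fun a => Finsupp.single a (1 : ℤ)) by rw [hB, Multiset.map_map]; rfl]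
    exact series_apply_s6 B x
  have hdfA : ∀ x, deathSeries f₀ (x + ℓ) = (A.count x : ℤ) := by
    intro x
    rw [deathSeries, show f₀.map (fun b => Finsupp.single (b.1 + b.2) (1 : ℤ))
          = (A.map (fun a => a + ℓ)).map (fun a => Finsupp.single a (1 : ℤ)) by
        rw [← hfd, Multiset.map_map]; rfl]
    rw [series_apply_s6]
    norm_cast
    exact Multiset.count_map_eq_count' (fun a => a + ℓ) A (add_left_injective ℓ) x
  have hdgB : ∀ x, deathSeries g₀ (x + ℓ) = (B.count x : ℤ) := by
    intro x
    rw [deathSeries, show g₀.map (fun b => Finsupp.single (b.1 + b.2) (1 : ℤ))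
          = (B.map (fun a => a + ℓ)).map (fun a => Finsupp.single a (1 : ℤ)) by
        rw [← hgd, Multiset.map_map]; rfl]
    rw [series_apply_s6]
    norm_cast
    exact Multiset.count_map_eq_count' (fun a => a + ℓ) B (add_left_injective ℓ) x
  set P : ℝ →₀ ℤ := birthSeries f₀ - birthSeries g₀ with hP
  have hPzero : P = 0 := by
    apply shift_invariant_eq_zero ℓ hℓ
    intro x
    have hx := DFunLike.congr_fun hC0 (x + ℓ)
    rw [critSeries, critSeries, Finsupp.sub_apply, Finsupp.sub_apply,
        hdfA x, hdgB x] at hx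
    have e1 := hbfA (x + ℓ); have e2 := hbgB (x + ℓ)
    have e3 := hbfA x; have e4 := hbgB x
    rw [hP]
    simp only [Finsupp.sub_apply]
    omega
  have hAB : A = B := by
    ext x
    have hx := DFunLike.congr_fun hPzero x
    rw [hP] at hx
    simp only [Finsupp.sub_apply, Finsupp.coe_zero, Pi.zero_apply] at hx
    have h1 := hbfA x; have h2 := hbgB x
    omega
  have hfg0 : f₀ = g₀ := by
    have e1 : f₀.map (fun b : ℝ × ℝ => (b.1, ℓ)) = f₀ := by
      rw [show f₀.map (fun b : ℝ × ℝ => (b.1, ℓ)) = f₀.map id from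
        Multiset.map_congr rfl fun b hb => by rw [← hf₀ b hb]; rfl, Multiset.map_id]
    have e2 : g₀.map (fun b : ℝ × ℝ => (b.1, ℓ)) = g₀ := by
      rw [show g₀.map (fun b : ℝ × ℝ => (b.1, ℓ)) = g₀.map id from
        Multiset.map_congr rfl fun b hb => by rw [← hg₀ b hb]; rfl, Multiset.map_id]
    calc f₀ = A.map (fun a => (a, ℓ)) := by rw [hA, Multiset.map_map]; exact e1.symm
      _ = B.map (fun a => (a, ℓ)) := by rw [hAB]
      _ = g₀ := by rw [hB, Multiset.map_map]; exact e2
  rw [hf, hg, hαβ, hfg0]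
end

section
/- Fix ℓ > 0 and ℓ̃ > 0 with ℓ ≠ ℓ̃. Let f = {(α̃, ℓ̃)} + f₀ be a barcode consisting of one bar (α̃, ℓ̃) together with a barcode f₀ of m bars all of lifespan ℓ. Then the birth grade of the outlier bar is determined by the formula α̃ = (μ₂(C(f)) + ℓ̃² + m·ℓ² + 2ℓ·Δ(f)) / (2(ℓ − ℓ̃)), where μ₂ is the second moment and Δ(f) is the drift of f. -/
noncomputable def moment2AddHom : (ℝ →₀ ℤ) →+ ℝ :=
  AddMonoidHom.mk' moment2 (fun P Q => by
    unfold moment2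
    apply Finsupp.sum_add_index'
    · intro a; simp
    · intro a b₁ b₂; push_cast; ring)

lemma moment2AddHom_single (β : ℝ) :
    moment2AddHom (Finsupp.single β 1) = β ^ 2 := by
  show moment2 _ = _
  unfold moment2
  rw [Finsupp.sum_single_index] <;> simp

lemma Multiset.sum_map_congr {α β : Type*} [AddCommMonoid β] {s t : Multiset α}
    {g h : α → β} (hst : s = t) (hgh : ∀ a ∈ t, g a = h a) :
    (s.map g).sum = (t.map h).sum := by
  rw [Multiset.map_congr hst hgh]

lemma sum_sq_sub (ℓ : ℝ) (s : Multiset (ℝ × ℝ)) :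
    ((s.map (fun b => b.1 ^ 2 - (b.1 + ℓ) ^ 2)).sum : ℝ) =
      -2 * ℓ * (s.map Prod.fst).sum - (Multiset.card s : ℝ) * ℓ ^ 2 := by
  induction s using Multiset.induction with
  | empty => simp
  | cons a s ih => simp only [Multiset.map_cons, Multiset.sum_cons,
      Multiset.card_cons, ih]; push_cast; ring

/-- the birth grade of the outlier bar is
`α̃ = (μ₂(C(f)) + ℓ̃² + m·ℓ² + 2ℓ·Δ(f)) / (2(ℓ − ℓ̃))`. -/
theorem outlier_birth_grade
    (ℓ ℓt : ℝ) (hℓ : 0 < ℓ) (hℓt : 0 < ℓt) (hℓne : ℓ ≠ ℓt)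
    (αt : ℝ) (f₀ : Multiset (ℝ × ℝ)) (hf₀ : ∀ b ∈ f₀, b.2 = ℓ)
    (m : ℕ) (hm : m = Multiset.card f₀)
    (f : Multiset (ℝ × ℝ)) (hf : f = (αt, ℓt) ::ₘ f₀) :
    αt = (moment2 (critSeries f) + ℓt ^ 2 + m * ℓ ^ 2 + 2 * ℓ * drift f) /
        (2 * (ℓ - ℓt)) := by
  have key : moment2 (critSeries f) =
      ((f.map (fun b => b.1 ^ 2 - (b.1 + b.2) ^ 2)).sum : ℝ) := by
    show moment2AddHom (critSeries f) = _
    rw [critSeries, map_sub, birthSeries, deathSeries,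
      map_multiset_sum, map_multiset_sum, Multiset.map_map, Multiset.map_map]
    simp only [Function.comp, moment2AddHom_single]
    rw [← Multiset.sum_map_sub]
  subst hf hm
  have hd : drift ((αt, ℓt) ::ₘ f₀) = αt + (f₀.map Prod.fst).sum := by
    simp [drift]
  have hsum : ((f₀.map (fun b => b.1 ^ 2 - (b.1 + b.2) ^ 2)).sum : ℝ) =
      (f₀.map (fun b => b.1 ^ 2 - (b.1 + ℓ) ^ 2)).sum := by
    apply Multiset.sum_map_congr rfl
    intro b hb; rw [hf₀ b hb]
  have hsum2 := sum_sq_sub ℓ f₀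
  rw [key, Multiset.map_cons, Multiset.sum_cons, hsum, hsum2, hd]
  have hne : ℓ - ℓt ≠ 0 := sub_ne_zero.mpr hℓne
  field_simp
  ring
end

section
/- Let ℓ > 0 and let f = g + h be a barcode written as the multiset sum of a barcode g, every bar of which has lifespan exactly ℓ, and a barcode h, every bar of which has lifespan strictly greater than ℓ. Then for every integer p ≥ 1, C(f^∧p) − C(h^∧p) = Q − τ_ℓ(Q), where Q = B(f^∧p) − B(h^∧p) ∈ ℝ →₀ ℤ and τ_ℓ(Q) denotes the translate of Q by ℓ (the finitely supported function β ↦ Q(β − ℓ), i.e. multiplication of Q by x^ℓ). Equivalently, C(h^∧p) = C(f^∧p) − (1 − x^ℓ)·(B(f^∧p) − B(h^∧p)). -/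
private lemma birthSeries_add' (s t : Multiset (ℝ × ℝ)) :
    birthSeries (s + t) = birthSeries s + birthSeries t := by
  simp [birthSeries]

private lemma deathSeries_add' (s t : Multiset (ℝ × ℝ)) :
    deathSeries (s + t) = deathSeries s + deathSeries t := by
  simp [deathSeries]

private lemma step_lemma (ℓ : ℝ) (a : ℝ × ℝ) (ha : a.2 = ℓ) (t : Multiset (ℝ × ℝ))
    (ht : ∀ b ∈ t, ℓ ≤ b.2) (n : ℕ) :
    deathSeries (extPow (a ::ₘ t) (n+1)) - deathSeries (extPow t (n+1)) =
      Finsupp.mapDomain (· + ℓ)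
        (birthSeries (extPow (a ::ₘ t) (n+1)) - birthSeries (extPow t (n+1))) := by
  have hsplit : extPow (a ::ₘ t) (n+1) = extPow t (n+1) +
      (Multiset.powersetCard n t).map
        (fun s => (a.1 + (s.map Prod.fst).sum, ℓ)) := by
    rw [extPow, Multiset.powersetCard_cons, Multiset.map_add, extPow]
    congr 1
    rw [Multiset.map_map]
    refine Multiset.map_congr rfl ?_
    intro s hs
    have hst : s ≤ t := (Multiset.mem_powersetCard.mp hs).1
    simp only [Function.comp_apply, Multiset.map_cons, Multiset.sum_cons, ha]
    congr 1
    apply IsLeast.csInf_eq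
    constructor
    · simp only [Multiset.map_cons, Set.mem_setOf_eq, Multiset.mem_cons, ha]
      left; trivial
    · intro x hx
      simp only [Multiset.map_cons, Set.mem_setOf_eq, Multiset.mem_cons, ha] at hx
      rcases hx with rfl | hx
      · exact le_refl _
      · obtain ⟨b, hb, rfl⟩ := Multiset.mem_map.mp hx
        exact ht b (Multiset.mem_of_le hst hb)
  rw [hsplit, birthSeries_add', deathSeries_add', add_sub_cancel_left, add_sub_cancel_left]
  rw [deathSeries, birthSeries, Multiset.map_map, Multiset.map_map]
  rw [show (Finsupp.mapDomain (M := ℤ) (· + ℓ)) =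
        ⇑(Finsupp.mapDomain.addMonoidHom (· + ℓ)) from rfl, map_multiset_sum]
  rw [Multiset.map_map]
  refine congrArg _ (Multiset.map_congr rfl ?_)
  intro s _
  simp [Finsupp.mapDomain.addMonoidHom_apply, Finsupp.mapDomain_single, add_assoc]

private lemma telescope_lemma (ℓ : ℝ) (g : Multiset (ℝ × ℝ)) (hg : ∀ b ∈ g, b.2 = ℓ) :
    ∀ t : Multiset (ℝ × ℝ), (∀ b ∈ t, ℓ ≤ b.2) → ∀ n : ℕ,
    deathSeries (extPow (g + t) (n+1)) - deathSeries (extPow t (n+1)) =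
      Finsupp.mapDomain (· + ℓ)
        (birthSeries (extPow (g + t) (n+1)) - birthSeries (extPow t (n+1))) := by
  induction g using Multiset.induction with
  | empty => intro t _ n; simp
  | cons a g ih =>
    intro t ht n
    have ha : a.2 = ℓ := hg a (Multiset.mem_cons_self a g)
    have hg' : ∀ b ∈ g, b.2 = ℓ := fun b hb => hg b (Multiset.mem_cons_of_mem hb)
    have ht' : ∀ b ∈ g + t, ℓ ≤ b.2 := by
      intro b hb
      rcases Multiset.mem_add.mp hb with hb | hb
      · exact (hg' b hb).ge
      · exact ht b hb
    have h1 := step_lemma ℓ a ha (g + t) ht' n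
    have h2 := ih hg' t ht n
    rw [Multiset.cons_add]
    have hsplit : deathSeries (extPow (a ::ₘ (g + t)) (n+1)) - deathSeries (extPow t (n+1))
        = (deathSeries (extPow (a ::ₘ (g + t)) (n+1)) - deathSeries (extPow (g + t) (n+1)))
          + (deathSeries (extPow (g + t) (n+1)) - deathSeries (extPow t (n+1))) := by abel
    rw [hsplit, h1, h2, ← Finsupp.mapDomain_add]
    congr 1
    abel

/-- if `f = g + h` where every bar of `g` has lifespan `ℓ` and every bar
of `h` has lifespan `> ℓ`, then `C(f^∧p) − C(h^∧p) = Q − x^ℓ·Q` with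
`Q = B(f^∧p) − B(h^∧p)`. -/
theorem critSeries_extPow_split
    (ℓ : ℝ) (hℓ : 0 < ℓ) (f g h : Multiset (ℝ × ℝ)) (hfgh : f = g + h)
    (hg : ∀ b ∈ g, b.2 = ℓ) (hh : ∀ b ∈ h, ℓ < b.2)
    (p : ℕ) (hp : 1 ≤ p) :
    critSeries (extPow f p) - critSeries (extPow h p) =
      (birthSeries (extPow f p) - birthSeries (extPow h p)) -
        Finsupp.mapDomain (· + ℓ)
          (birthSeries (extPow f p) - birthSeries (extPow h p)) := by
  obtain ⟨n, rfl⟩ : ∃ n, p = n + 1 := ⟨p - 1, (Nat.succ_pred_eq_of_pos hp).symm⟩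
  subst hfgh
  have ht : ∀ b ∈ h, ℓ ≤ b.2 := fun b hb => (hh b hb).le
  have key := telescope_lemma ℓ g hg h ht n
  simp only [critSeries]
  rw [← key]
  abel
end

section
/- Let K be a field and let M : ℤ ⥤ ModuleCat K be a persistence module indexed by the linearly ordered set ℤ that is bounded below, i.e. there exists g₀ ∈ ℤ such that M(t) = 0 for every t < g₀. Then there exist an index set J and families (α_j)_{j∈J} in ℤ and (β_j)_{j∈J} in ℤ ∪ {∞} with α_j < β_j, such that M is isomorphic to the coproduct ⨁_{j∈J} Region(S_j), where S_j = {t ∈ ℤ : α_j ≤ t < β_j}. -/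
open CategoryTheory CategoryTheory.Limits Classical

noncomputable section

/-- The value of the interval module `Region S` at `t`: a copy of `K` when `t ∈ S`
and `0` otherwise, realized as a submodule of `K`. -/
def regionCarrier (K : Type) [Field K] {G : Type} (S : Set G) (t : G) :
    Submodule K K where
  carrier := {x : K | x = 0 ∨ t ∈ S}
  zero_mem' := Or.inl rfl
  add_mem' := by
    rintro a b (rfl | h) (rfl | h)
    · exact Or.inl (by simp)
    · exact Or.inr h
    · exact Or.inr h
    · exact Or.inr h
  smul_mem' := by
    rintro c x (rfl | h)
    · exact Or.inl (by simp)
    · exact Or.inr h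

/-- The structure map of the interval module: the "identity" of `K` when
`[s, t] ⊆ S` and `0` otherwise. -/
def regionMap (K : Type) [Field K] {G : Type} [LinearOrder G] (S : Set G)
    {s t : G} (hst : s ≤ t) :
    regionCarrier K S s →ₗ[K] regionCarrier K S t :=
  if h : Set.Icc s t ⊆ S then
    { toFun := fun x => ⟨(x : K), Or.inr (h ⟨hst, le_rfl⟩)⟩
      map_add' := fun _ _ => rfl
      map_smul' := fun _ _ => rfl }
  else 0

lemma regionMap_apply_coe (K : Type) [Field K] {G : Type} [LinearOrder G]
    (S : Set G) {s t : G} (hst : s ≤ t) (x : regionCarrier K S s) :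
    ((regionMap K S hst x : regionCarrier K S t) : K) =
      if Set.Icc s t ⊆ S then (x : K) else 0 := by
  by_cases h : Set.Icc s t ⊆ S
  · rw [regionMap, dif_pos h, if_pos h]
    rfl
  · rw [regionMap, dif_neg h, if_neg h]
    rfl

/-- The interval module (region module) of a subset `S` of a linear order `G`:
the persistence module whose value at `t` is `K` if `t ∈ S` and `0` otherwise, with
structure map for `s ≤ t` the identity of `K` when `[s, t] ⊆ S` and `0` otherwise. -/
def Region (K : Type) [Field K] {G : Type} [LinearOrder G] (S : Set G) :
    G ⥤ ModuleCat.{0} K where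
  obj t := ModuleCat.of K (regionCarrier K S t)
  map {s t} f := ModuleCat.ofHom (regionMap K S (leOfHom f))
  map_id := by
    intro t
    apply ModuleCat.hom_ext
    apply LinearMap.ext
    intro x
    change regionMap K S (le_refl t) x = x
    apply Subtype.ext
    rw [regionMap_apply_coe]
    by_cases h : Set.Icc t t ⊆ S
    · rw [if_pos h]
    · have ht : t ∉ S := fun hts => h (by rw [Set.Icc_self]; simpa using hts)
      rw [if_neg h]
      rcases x.2 with hx | hx
      · exact hx.symm
      · exact absurd hx ht
  map_comp := by
    intro s t u f g
    have hst : s ≤ t := leOfHom f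
    have htu : t ≤ u := leOfHom g
    apply ModuleCat.hom_ext
    apply LinearMap.ext
    intro x
    change regionMap K S (hst.trans htu) x = regionMap K S htu (regionMap K S hst x)
    apply Subtype.ext
    rw [regionMap_apply_coe, regionMap_apply_coe, regionMap_apply_coe]
    by_cases h1 : Set.Icc s u ⊆ S
    · have h2 : Set.Icc s t ⊆ S := fun v hv => h1 ⟨hv.1, hv.2.trans htu⟩
      have h3 : Set.Icc t u ⊆ S := fun v hv => h1 ⟨hst.trans hv.1, hv.2⟩
      rw [if_pos h1, if_pos h2, if_pos h3]
    · rw [if_neg h1]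
      by_cases h3 : Set.Icc t u ⊆ S
      · have h2 : ¬ Set.Icc s t ⊆ S := by
          intro h2
          exact h1 fun v hv => by
            rcases le_total v t with hvt | htv
            · exact h2 ⟨hv.1, hvt⟩
            · exact h3 ⟨htv, hv.2⟩
        rw [if_pos h3, if_neg h2]
      · rw [if_neg h3]

end

/-! The kernels of the structure maps out of `M T` form an increasing filtration of `M T`
indexed by `ℕ`. Starting below the time where `M` vanishes, we build inductively a set of
generators (vectors tagged with their birth times) whose surviving images form a basis of `M t`
for every time `t` reached so far, and whose images at the current time `T` form a basis
compatible with the kernel filtration of `M T`: the part of its span lying in a kernel is spanned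
by the basis vectors in that kernel. Compatibility makes the images at `T + 1` of the surviving
generators independent and again compatible; Zorn's lemma, adding each time a vector of least
filtration degree in its coset, extends them to a compatible basis of `M (T + 1)`, and the added
vectors are the generators born at `T + 1`. In the union of all stages every generator spans a copy
of an interval module `[birth, death)`, and at each time these copies are the coproduct of their
values, so `M` is their coproduct. -/

lemma Int.exists_eq_setOf_le_lt {S : Set ℤ} (hS : S.OrdConnected) (hne : S.Nonempty)
    (hbdd : BddBelow S) :
    ∃ α : ℤ, ∃ β : WithTop ℤ, (α : WithTop ℤ) < β ∧ S = {t | α ≤ t ∧ (t : WithTop ℤ) < β} := by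
  by_cases hup : BddAbove S
  · refine ⟨sInf S, (sSup S + 1 : ℤ), WithTop.coe_lt_coe.mpr ?_, Set.ext fun t => ?_⟩
    · obtain ⟨s, hs⟩ := hne
      linarith [csInf_le hbdd hs, le_csSup hup hs]
    · rw [Set.mem_ofPred_eq, WithTop.coe_lt_coe, Int.lt_add_one_iff]
      exact ⟨fun ht => ⟨csInf_le hbdd ht, le_csSup hup ht⟩,
        fun ht => hS.out (Int.csInf_mem hne hbdd) (Int.csSup_mem hne hup) ht⟩
  · refine ⟨sInf S, ⊤, WithTop.coe_lt_top _, Set.ext fun t => ?_⟩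
    simp only [Set.mem_ofPred_eq, WithTop.coe_lt_top, and_true]
    refine ⟨csInf_le hbdd, fun ht => ?_⟩
    obtain ⟨s, hs, hts⟩ := not_bddAbove_iff.mp hup t
    exact hS.out (Int.csInf_mem hne hbdd) hs ⟨ht, hts.le⟩

section Compatible

open Submodule

variable {K V : Type*} [Field K] [AddCommGroup V] [Module K V]

def IsCompatible (B : Set V) (U : Submodule K V) : Prop :=
  span K B ⊓ U ≤ span K (B ∩ U)

lemma isCompatible_sUnion {𝒞 : Set (Set V)} (h𝒞 : DirectedOn (· ⊆ ·) 𝒞) (hne : 𝒞.Nonempty)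
    {U : Submodule K V} (hU : ∀ B ∈ 𝒞, IsCompatible B U) : IsCompatible (⋃₀ 𝒞) U := by
  rintro x ⟨hx, hxU⟩
  obtain ⟨T, hT, hxT⟩ := mem_span_finite_of_mem_span hx
  obtain ⟨B, hB, hTB⟩ :=
    DirectedOn.exists_mem_subset_of_finite_of_subset_sUnion hne h𝒞 T.finite_toSet hT
  have hxB : x ∈ span K (B ∩ U) := hU B hB ⟨span_mono hTB hxT, hxU⟩
  exact span_mono (Set.inter_subset_inter_left _ (Set.subset_sUnion_of_mem hB)) hxB

lemma IsCompatible.insert {B : Set V} {U : Submodule K V} (hB : IsCompatible B U) {v : V}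
    (hv : ∀ w, w - v ∈ span K B → w ∈ U → v ∈ U) : IsCompatible (insert v B) U := by
  rintro x ⟨hx, hxU⟩
  obtain ⟨c, w, hw, rfl⟩ := mem_span_insert.mp hx
  have hBU : span K (B ∩ U) ≤ span K (Insert.insert v B ∩ U) :=
    span_mono (Set.inter_subset_inter_left _ (Set.subset_insert v B))
  rcases eq_or_ne c 0 with rfl | hc
  · rw [zero_smul, zero_add] at hxU ⊢
    exact hBU (hB ⟨hw, hxU⟩)
  · have hvU : v ∈ U := hv (c⁻¹ • (c • v + w)) (by
      rw [smul_add, inv_smul_smul₀ hc, add_sub_cancel_left]; exact smul_mem _ _ hw)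
      (U.smul_mem _ hxU)
    have hwU : w ∈ U := by simpa using U.sub_mem hxU (U.smul_mem c hvU)
    exact add_mem (smul_mem _ _ (subset_span ⟨Set.mem_insert v B, hvU⟩)) (hBU (hB ⟨hw, hwU⟩))

lemma exists_sub_mem_forall_mem {ι : Type*} [LinearOrder ι] [WellFoundedLT ι]
    {F : ι → Submodule K V} (hF : Monotone F) (S : Submodule K V) (v : V) :
    ∃ v', v' - v ∈ S ∧ ∀ i, ∀ w, w - v' ∈ S → w ∈ F i → v' ∈ F i := by
  by_cases hU : ∃ i, ∃ w, w - v ∈ S ∧ w ∈ F i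
  · obtain ⟨i₀, ⟨v', hv', hv'F⟩, hmin⟩ :=
      wellFounded_lt.has_min {i | ∃ w, w - v ∈ S ∧ w ∈ F i} hU
    refine ⟨v', hv', fun i w hw hwF => hF ?_ hv'F⟩
    exact not_lt.mp (hmin i ⟨w, by simpa using S.add_mem hw hv', hwF⟩)
  · exact ⟨v, by simp, fun i w hw hwF => (hU ⟨i, w, hw, hwF⟩).elim⟩

theorem exists_linearIndepOn_isCompatible_extension {ι : Type*} [LinearOrder ι]
    [WellFoundedLT ι] {F : ι → Submodule K V} (hF : Monotone F) {B₀ : Set V}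
    (hB₀ : LinearIndepOn K id B₀) (hB₀F : ∀ i, IsCompatible B₀ (F i)) :
    ∃ B, B₀ ⊆ B ∧ LinearIndepOn K id B ∧ (∀ i, IsCompatible B (F i)) ∧ span K B = ⊤ := by
  obtain ⟨B, hB₀B, hmax⟩ := zorn_subset_nonempty
    {B : Set V | LinearIndepOn K id B ∧ ∀ i, IsCompatible B (F i)}
    (fun 𝒞 h𝒞 hchain hne => ⟨⋃₀ 𝒞,
      ⟨linearIndepOn_sUnion_of_directed hchain.directedOn fun B hB => (h𝒞 hB).1,
        fun i => isCompatible_sUnion hchain.directedOn hne fun B hB => (h𝒞 hB).2 i⟩,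
      fun _ => Set.subset_sUnion_of_mem⟩)
    B₀ ⟨hB₀, hB₀F⟩
  obtain ⟨hBi, hBF⟩ := hmax.prop
  refine ⟨B, hB₀B, hBi, hBF, eq_top_iff'.mpr fun v => by_contra fun hv => ?_⟩
  -- a representative of `v + span B` of least filtration degree can be added to `B`
  obtain ⟨v', hv'v, hv'⟩ := exists_sub_mem_forall_mem hF (span K B) v
  have hv'B : v' ∉ span K B := fun h => hv (by simpa using sub_mem h hv'v)
  have hins : Insert.insert v' B ∈
      {B : Set V | LinearIndepOn K id B ∧ ∀ i, IsCompatible B (F i)} :=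
    ⟨hBi.id_insert hv'B, fun i => (hBF i).insert (hv' i)⟩
  exact hv'B (subset_span (hmax.2 hins (Set.subset_insert v' B) (Set.mem_insert v' B)))

variable {W X : Type*} [AddCommGroup W] [Module K W] {f : X → V} {s : Set X} (φ : V →ₗ[K] W)

lemma LinearIndepOn.linearMap_comp_of_isCompatible (hs : LinearIndepOn K f s)
    (hker : IsCompatible (f '' s) (LinearMap.ker φ)) :
    LinearIndepOn K (φ ∘ f) {x ∈ s | φ (f x) ≠ 0} := by
  have hsplit : Disjoint (span K (f '' {x ∈ s | φ (f x) ≠ 0}))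
      (span K (f '' (s \ {x ∈ s | φ (f x) ≠ 0}))) :=
    ((linearIndepOn_union_iff Set.disjoint_sdiff_right).mp
      (by rwa [Set.union_sdiff_cancel (Set.sep_subset _ _)])).2.2
  refine (hs.mono (Set.sep_subset _ _)).map ?_
  rw [← Set.image_eq_range, disjoint_iff_inf_le]
  rintro x ⟨hx, hxk⟩
  refine hsplit.le_bot ⟨hx, span_mono ?_
    (hker ⟨span_mono (Set.image_mono (Set.sep_subset _ _)) hx, hxk⟩)⟩
  rintro _ ⟨⟨x, hx, rfl⟩, hk⟩
  exact ⟨x, ⟨hx, fun h => h.2 hk⟩, rfl⟩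

lemma IsCompatible.linearMap_comp {U : Submodule K W} (h : IsCompatible (f '' s) (U.comap φ)) :
    IsCompatible ((φ ∘ f) '' {x ∈ s | φ (f x) ≠ 0}) U := by
  rintro _ ⟨hy, hyU⟩
  rw [SetLike.mem_coe, Set.image_comp, span_image] at hy
  obtain ⟨x, hx, rfl⟩ := hy
  have hx' := h ⟨span_mono (Set.image_mono (Set.sep_subset _ _)) hx, hyU⟩
  have hφx : φ x ∈ span K (φ '' (f '' s ∩ U.comap φ)) := by
    rw [span_image]; exact mem_map_of_mem hx'
  refine span_le.mpr ?_ hφx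
  rintro _ ⟨_, ⟨⟨x, hx, rfl⟩, hxU⟩, rfl⟩
  by_cases h0 : φ (f x) = 0
  · rw [h0]; exact zero_mem _
  · exact subset_span ⟨⟨x, ⟨hx, h0⟩, rfl⟩, hxU⟩

end Compatible

section Region

noncomputable section

variable {K : Type} [Field K] {G : Type}

def regionUnit {S : Set G} {t : G} (ht : t ∈ S) : regionCarrier K S t := ⟨1, Or.inr ht⟩

lemma regionCarrier_linearMap_ext {V : Type*} [AddCommGroup V] [Module K V] {S : Set G} {t : G}
    {φ ψ : regionCarrier K S t →ₗ[K] V}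
    (h : ∀ ht : t ∈ S, φ (regionUnit ht) = ψ (regionUnit ht)) : φ = ψ := by
  ext x
  rcases x.2 with hx | ht
  · rw [show x = 0 from Subtype.ext hx, map_zero, map_zero]
  · rw [show x = (x : K) • regionUnit ht from Subtype.ext (by simp [regionUnit]), map_smul,
      map_smul, h ht]

variable [LinearOrder G]

def regionHom (S : Set G) (N : G ⥤ ModuleCat.{0} K) (p : ∀ t, N.obj t)
    (hp : ∀ s t (f : s ⟶ t), s ∈ S → N.map f (p s) = p t) (hS : ∀ t ∉ S, p t = 0) :
    Region K S ⟶ N where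
  app t := ModuleCat.ofHom ((regionCarrier K S t).subtype.smulRight (p t))
  naturality s t f := by
    refine ModuleCat.hom_ext (regionCarrier_linearMap_ext fun hs => ?_)
    change ((regionMap K S (leOfHom f) (regionUnit hs) : regionCarrier K S t) : K) • p t =
      N.map f ((1 : K) • p s)
    rw [one_smul, hp s t f hs, regionMap_apply_coe]
    split_ifs with h
    · exact one_smul K _
    · obtain ⟨u, ⟨hsu, hut⟩, hu⟩ := Set.not_subset.mp h
      rw [zero_smul, ← hp s t f hs, Subsingleton.elim f (homOfLE hsu ≫ homOfLE hut), N.map_comp,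
        ModuleCat.comp_apply, hp s u _ hs, hS u hu, map_zero]

lemma regionHom_app_regionUnit (S : Set G) (N : G ⥤ ModuleCat.{0} K) (p : ∀ t, N.obj t) (hp hS)
    {t : G} (ht : t ∈ S) : (regionHom S N p hp hS).app t (regionUnit ht) = p t :=
  one_smul K (p t)

def isColimitRegionCofan {ι : Type} (S : ι → Set G) (N : G ⥤ ModuleCat.{0} K)
    (f : ∀ i, Region K (S i) ⟶ N) (t : G) (b : Module.Basis {i // t ∈ S i} K (N.obj t))
    (hb : ∀ i, b i = (f i.1).app t (regionUnit i.2)) :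
    IsColimit (((evaluation G (ModuleCat.{0} K)).obj t).mapCocone (Cofan.mk N f)) where
  desc s := ModuleCat.ofHom (b.constr K fun i => s.ι.app ⟨i.1⟩ (regionUnit i.2))
  fac s := by
    rintro ⟨i⟩
    refine ModuleCat.hom_ext (regionCarrier_linearMap_ext fun ht => ?_)
    change b.constr K _ ((f i).app t (regionUnit ht)) = _
    rw [← hb ⟨i, ht⟩, b.constr_basis]
    rfl
  uniq s m hm := by
    refine ModuleCat.hom_ext (b.ext fun i => ?_)
    rw [ModuleCat.hom_ofHom, b.constr_basis, hb i]
    exact ModuleCat.comp_apply _ _ _ |>.symm.trans (congrArg (· (regionUnit i.2)) (hm ⟨i.1⟩))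

end

end Region

namespace PersistenceModule

open Submodule

noncomputable section

variable {K : Type} [Field K] (M : ℤ ⥤ ModuleCat.{0} K)

def transfer (s t : ℤ) : M.obj s →ₗ[K] M.obj t :=
  if h : s ≤ t then (M.map (homOfLE h)).hom else 0

lemma transfer_of_le {s t : ℤ} (h : s ≤ t) : transfer M s t = (M.map (homOfLE h)).hom :=
  dif_pos h

lemma transfer_of_lt {s t : ℤ} (h : t < s) : transfer M s t = 0 :=
  dif_neg (not_le.mpr h)

lemma transfer_self (t : ℤ) : transfer M t t = LinearMap.id := by
  rw [transfer_of_le M le_rfl]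
  exact congrArg ModuleCat.Hom.hom (M.map_id t)

lemma transfer_comp {s t u : ℤ} (hst : s ≤ t) (htu : t ≤ u) :
    transfer M t u ∘ₗ transfer M s t = transfer M s u := by
  rw [transfer_of_le M hst, transfer_of_le M htu, transfer_of_le M (hst.trans htu),
    ← ModuleCat.hom_comp, ← M.map_comp, homOfLE_comp]

-- Indexed by the delay `n` rather than by the target time, so that the index set is well-ordered.
def kerFiltration (T : ℤ) (n : ℕ) : Submodule K (M.obj T) :=
  LinearMap.ker (transfer M T (T + n))

lemma kerFiltration_mono (T : ℤ) : Monotone (kerFiltration M T) := fun m n hmn => by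
  rw [kerFiltration, kerFiltration, ← transfer_comp M (by omega : T ≤ T + m)
    (by omega : T + m ≤ T + n)]
  exact LinearMap.ker_le_ker_comp _ _

lemma comap_kerFiltration_succ (T : ℤ) (n : ℕ) :
    (kerFiltration M (T + 1) n).comap (transfer M T (T + 1)) = kerFiltration M T (n + 1) := by
  rw [kerFiltration, ← LinearMap.ker_comp, transfer_comp M (by omega) (by omega), kerFiltration,
    Nat.cast_succ, add_comm (n : ℤ), add_assoc]

lemma kerFiltration_one (T : ℤ) :
    kerFiltration M T 1 = LinearMap.ker (transfer M T (T + 1)) := by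
  rw [kerFiltration, Nat.cast_one]

abbrev Generator := Σ b : ℤ, M.obj b

variable {M}

def push (t : ℤ) (g : Generator M) : M.obj t := transfer M g.1 t g.2

lemma push_of_lt {t : ℤ} {g : Generator M} (h : t < g.1) : push t g = 0 := by
  rw [push, transfer_of_lt M h, LinearMap.zero_apply]

lemma le_of_push_ne_zero {t : ℤ} {g : Generator M} (h : push t g ≠ 0) : g.1 ≤ t :=
  not_lt.mp fun hlt => h (push_of_lt hlt)

@[simp]
lemma push_mk (b : ℤ) (v : M.obj b) : push b (⟨b, v⟩ : Generator M) = v := by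
  rw [push, transfer_self, LinearMap.id_apply]

lemma transfer_push {s t : ℤ} {g : Generator M} (hg : g.1 ≤ s) (hst : s ≤ t) :
    transfer M s t (push s g) = push t g :=
  LinearMap.congr_fun (transfer_comp M hg hst) g.2

def alive (G : Set (Generator M)) (t : ℤ) : Set (Generator M) := {g ∈ G | push t g ≠ 0}

lemma alive_union_of_lt {G N : Set (Generator M)} {t : ℤ} (hN : ∀ g ∈ N, t < g.1) :
    alive (G ∪ N) t = alive G t := by
  ext g
  simp only [alive, Set.mem_ofPred_eq, Set.mem_union, or_and_right, or_iff_left_iff_imp]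
  exact fun ⟨hg, hne⟩ => absurd (push_of_lt (hN g hg)) hne

def IsBasisAt (G : Set (Generator M)) (t : ℤ) : Prop :=
  LinearIndepOn K (push t) (alive G t) ∧ span K (push t '' alive G t) = ⊤

structure IsBarcodeBasisUpTo (T : ℤ) (G : Set (Generator M)) : Prop where
  birth_le : ∀ g ∈ G, g.1 ≤ T
  ne_zero : ∀ g ∈ G, g.2 ≠ 0
  isBasisAt : ∀ t ≤ T, IsBasisAt G t
  isCompatible : ∀ n, IsCompatible (push T '' alive G T) (kerFiltration M T n)

lemma isBarcodeBasisUpTo_empty {T : ℤ} (hM : ∀ t ≤ T, ∀ v : M.obj t, v = 0) :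
    IsBarcodeBasisUpTo T (∅ : Set (Generator M)) where
  birth_le := by simp
  ne_zero := by simp
  isBasisAt t ht := by
    have : Subsingleton (M.obj t) := ⟨fun v w => (hM t ht v).trans (hM t ht w).symm⟩
    simp [IsBasisAt, alive, Subsingleton.elim _ (⊤ : Submodule K (M.obj t))]
  isCompatible n := by simp [IsCompatible, alive]

namespace IsBarcodeBasisUpTo

variable {T : ℤ} {G : Set (Generator M)}

lemma push_succ_eqOn (hG : IsBarcodeBasisUpTo T G) :
    Set.EqOn (push (T + 1)) (transfer M T (T + 1) ∘ push T) (alive G (T + 1)) :=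
  fun g hg => (transfer_push (hG.birth_le g hg.1) (by omega)).symm

lemma alive_succ (hG : IsBarcodeBasisUpTo T G) :
    alive G (T + 1) = {g ∈ alive G T | transfer M T (T + 1) (push T g) ≠ 0} := by
  ext g
  simp only [alive, Set.mem_ofPred_eq]
  constructor
  · rintro ⟨hg, hne⟩
    rw [hG.push_succ_eqOn ⟨hg, hne⟩] at hne
    exact ⟨⟨hg, fun h => hne (by simp [h])⟩, hne⟩
  · rintro ⟨⟨hg, -⟩, hne⟩
    exact ⟨hg, by rwa [← transfer_push (hG.birth_le g hg) (by omega : T ≤ T + 1)]⟩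

lemma linearIndepOn_succ (hG : IsBarcodeBasisUpTo T G) :
    LinearIndepOn K (push (T + 1)) (alive G (T + 1)) := by
  rw [linearIndepOn_congr hG.push_succ_eqOn, hG.alive_succ]
  refine (hG.isBasisAt T le_rfl).1.linearMap_comp_of_isCompatible _ ?_
  simpa [kerFiltration_one] using hG.isCompatible 1

lemma isCompatible_succ (hG : IsBarcodeBasisUpTo T G) (n : ℕ) :
    IsCompatible (push (T + 1) '' alive G (T + 1)) (kerFiltration M (T + 1) n) := by
  rw [hG.push_succ_eqOn.image_eq, hG.alive_succ]
  refine IsCompatible.linearMap_comp _ ?_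
  rw [comap_kerFiltration_succ]
  exact hG.isCompatible (n + 1)

theorem exists_succ (hG : IsBarcodeBasisUpTo T G) :
    ∃ G', IsBarcodeBasisUpTo (T + 1) G' ∧ G ⊆ G' ∧ ∀ g ∈ G', g.1 ≤ T → g ∈ G := by
  set B₀ := push (T + 1) '' alive G (T + 1)
  obtain ⟨B, hB₀B, hB, hBF, hBspan⟩ := exists_linearIndepOn_isCompatible_extension
    (kerFiltration_mono M (T + 1)) hG.linearIndepOn_succ.id_image hG.isCompatible_succ
  set N : Set (Generator M) := Sigma.mk (T + 1) '' (B \ B₀)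
  have hN_birth : ∀ g ∈ N, g.1 = T + 1 := by rintro _ ⟨w, -, rfl⟩; rfl
  have hN_image : push (T + 1) '' N = B \ B₀ := by simp [N, Set.image_image]
  have hN : LinearIndepOn K (push (T + 1)) N :=
    LinearIndepOn.image_of_comp _ _ <| (linearIndepOn_congr (v := push (T + 1) ∘ Sigma.mk (T + 1))
      (w := id) fun w _ => push_mk (T + 1) w).mpr (hB.mono Set.sdiff_subset)
  have halive : alive (G ∪ N) (T + 1) = alive G (T + 1) ∪ N := by
    ext g
    simp only [alive, Set.mem_ofPred_eq, Set.mem_union, or_and_right]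
    refine or_congr_right ⟨And.left, fun hg => ⟨hg, ?_⟩⟩
    obtain ⟨w, hw, rfl⟩ := hg
    simpa using hB.ne_zero hw.1
  have himage : push (T + 1) '' alive (G ∪ N) (T + 1) = B := by
    rw [halive, Set.image_union, hN_image, Set.union_sdiff_cancel hB₀B]
  refine ⟨G ∪ N, ⟨?_, ?_, fun t ht => ?_, fun n => himage ▸ hBF n⟩, Set.subset_union_left, ?_⟩
  · rintro g (hg | hg)
    · exact (hG.birth_le g hg).trans (by omega)
    · exact (hN_birth g hg).le
  · rintro g (hg | ⟨w, hw, rfl⟩)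
    · exact hG.ne_zero g hg
    · exact hB.ne_zero hw.1
  · rcases ht.lt_or_eq with ht | rfl
    · rw [IsBasisAt, alive_union_of_lt fun g hg => by rw [hN_birth g hg]; omega]
      exact hG.isBasisAt t (by omega)
    · refine ⟨?_, himage ▸ hBspan⟩
      rw [halive]
      refine hG.linearIndepOn_succ.union hN ?_
      rw [hN_image]
      exact ((linearIndepOn_id_union_iff Set.disjoint_sdiff_right).mp
        (by rwa [Set.union_sdiff_cancel hB₀B])).2.2
  · rintro g (hg | hg) hgT
    · exact hg
    · exact absurd (hN_birth g hg) (by omega)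

end IsBarcodeBasisUpTo

section Stages

variable {T₀ : ℤ}

def stage (h₀ : IsBarcodeBasisUpTo T₀ (∅ : Set (Generator M))) :
    (n : ℕ) → {G : Set (Generator M) // IsBarcodeBasisUpTo (T₀ + n) G}
  | 0 => ⟨∅, by simpa using h₀⟩
  | n + 1 => ⟨(stage h₀ n).2.exists_succ.choose, by
      rw [Nat.cast_succ, ← add_assoc]; exact (stage h₀ n).2.exists_succ.choose_spec.1⟩

variable (h₀ : IsBarcodeBasisUpTo T₀ (∅ : Set (Generator M)))

lemma stage_mono : Monotone fun n => (stage h₀ n).1 :=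
  monotone_nat_of_le_succ fun n => (stage h₀ n).2.exists_succ.choose_spec.2.1

lemma mem_stage_of_birth_le {m n : ℕ} {g : Generator M} (hg : g ∈ (stage h₀ m).1)
    (hgn : g.1 ≤ T₀ + n) : g ∈ (stage h₀ n).1 := by
  rcases le_total m n with hmn | hnm
  · exact stage_mono h₀ hmn hg
  · induction m, hnm using Nat.le_induction with
    | base => exact hg
    | succ m hnm ih =>
      exact ih ((stage h₀ m).2.exists_succ.choose_spec.2.2 g hg (by omega))

theorem exists_forall_isBasisAt (hM : ∀ t ≤ T₀, ∀ v : M.obj t, v = 0) :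
    ∃ G : Set (Generator M), (∀ g ∈ G, g.2 ≠ 0) ∧ ∀ t, IsBasisAt G t := by
  have h₀ := isBarcodeBasisUpTo_empty hM
  refine ⟨⋃ n, (stage h₀ n).1, fun g hg => ?_, fun t => ?_⟩
  · obtain ⟨n, hn⟩ := Set.mem_iUnion.mp hg
    exact (stage h₀ n).2.ne_zero g hn
  · have ht : t ≤ T₀ + (t - T₀).toNat := by omega
    have halive : alive (⋃ n, (stage h₀ n).1) t = alive (stage h₀ (t - T₀).toNat).1 t := by
      ext g
      refine ⟨fun ⟨hg, hne⟩ => ⟨?_, hne⟩, fun ⟨hg, hne⟩ => ⟨Set.mem_iUnion_of_mem _ hg, hne⟩⟩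
      obtain ⟨m, hm⟩ := Set.mem_iUnion.mp hg
      exact mem_stage_of_birth_le h₀ hm ((le_of_push_ne_zero hne).trans ht)
    rw [IsBasisAt, halive]
    exact (stage h₀ _).2.isBasisAt t ht

end Stages

def support (g : Generator M) : Set ℤ := {t | push t g ≠ 0}

lemma map_push {g : Generator M} {s t : ℤ} (f : s ⟶ t) (hs : push s g ≠ 0) :
    M.map f (push s g) = push t g := by
  rw [← transfer_push (le_of_push_ne_zero hs) (leOfHom f), transfer_of_le M (leOfHom f)]
  rfl

lemma support_ordConnected (g : Generator M) : (support g).OrdConnected := by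
  refine ⟨fun s hs u hu t ⟨hst, htu⟩ ht => hu ?_⟩
  rw [← transfer_push ((le_of_push_ne_zero hs).trans hst) htu, ht, map_zero]

lemma exists_support_eq_setOf_le_lt {g : Generator M} (hg : g.2 ≠ 0) :
    ∃ α : ℤ, ∃ β : WithTop ℤ, (α : WithTop ℤ) < β ∧
      support g = {t | α ≤ t ∧ (t : WithTop ℤ) < β} :=
  Int.exists_eq_setOf_le_lt (support_ordConnected g) ⟨g.1, (push_mk g.1 g.2).trans_ne hg⟩
    ⟨g.1, fun _ => le_of_push_ne_zero⟩

def generatorHom (g : Generator M) : Region K (support g) ⟶ M :=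
  regionHom (support g) M (fun t => push t g) (fun _ _ f hs => map_push f hs)
    fun _ ht => not_not.mp ht

def IsBasisAt.basis {G : Set (Generator M)} {t : ℤ} (h : IsBasisAt G t) :
    Module.Basis {g : G // t ∈ support g.1} K (M.obj t) :=
  let e : {g : G // t ∈ support g.1} → alive G t := fun g => ⟨g.1.1, g.1.2, g.2⟩
  have he : Function.Injective e := fun _ _ hab => Subtype.val_injective
    (Subtype.val_injective (congrArg (Subtype.val : alive G t → Generator M) hab))
  Module.Basis.mk (v := fun g => push t g.1.1) (h.1.comp e he) <| by
    rw [← h.2]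
    refine span_mono ?_
    rintro _ ⟨g, ⟨hg, hne⟩, rfl⟩
    exact ⟨⟨⟨g, hg⟩, hne⟩, rfl⟩

def isColimitCofanGeneratorHom {G : Set (Generator M)} (hG : ∀ t, IsBasisAt G t) :
    IsColimit (Cofan.mk M fun g : G => generatorHom g.1) :=
  evaluationJointlyReflectsColimits _ fun t =>
    isColimitRegionCofan (fun g : G => support g.1) M (fun g => generatorHom g.1) t (hG t).basis
      fun g => by
        rw [IsBasisAt.basis, Module.Basis.mk_apply, generatorHom, regionHom_app_regionUnit]

theorem nonempty_iso_sigma_region {G : Set (Generator M)} (hG : ∀ t, IsBasisAt G t) :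
    Nonempty (M ≅ ∐ fun g : G => Region K (support g.1)) :=
  ⟨(isColimitCofanGeneratorHom hG).coconePointUniqueUpToIso (colimit.isColimit _)⟩

end

end PersistenceModule

/-- every persistence module over ℤ that is bounded below decomposes as
a coproduct of interval modules `Region {t | α_j ≤ t < β_j}` with `β_j` possibly `∞`. -/
theorem boundedBelow_interval_decomposition
    (K : Type) [Field K] (M : ℤ ⥤ ModuleCat.{0} K)
    (hbdd : ∃ g₀ : ℤ, ∀ t : ℤ, t < g₀ → ∀ v : M.obj t, v = 0) :
    ∃ (J : Type) (α : J → ℤ) (β : J → WithTop ℤ),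
      (∀ j : J, (α j : WithTop ℤ) < β j) ∧
        Nonempty (M ≅ ∐ fun j : J =>
          Region K {t : ℤ | α j ≤ t ∧ (t : WithTop ℤ) < β j}) := by
  obtain ⟨g₀, hbdd⟩ := hbdd
  obtain ⟨G, hG0, hG⟩ :=
    PersistenceModule.exists_forall_isBasisAt (T₀ := g₀ - 1) fun t ht => hbdd t (by omega)
  choose α β hαβ hS using fun g : G =>
    PersistenceModule.exists_support_eq_setOf_le_lt (hG0 g.1 g.2)
  refine ⟨G, α, β, hαβ, ?_⟩
  rw [show (fun g : G => Region K {t : ℤ | α g ≤ t ∧ (t : WithTop ℤ) < β g}) =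
    fun g => Region K (PersistenceModule.support g.1) from funext fun g => by rw [hS]]
  exact PersistenceModule.nonempty_iso_sigma_region hG
end

section
/- Let K be a field and let S ⊆ ℝ be a nonempty convex subset. Then every idempotent endomorphism of the interval module Region(S) is trivial: if e : Region(S) ⟶ Region(S) is a natural transformation with e ≫ e = e, then e = 0 or e is the identity. Consequently Region(S) is indecomposable. -/
open CategoryTheory CategoryTheory.Limits Classical

/-! An endomorphism of `Region K S` acts on each nonzero stalk `K` by a scalar. Inside the convex
set `S` all structure maps are identities, so naturality forces these scalars to agree:
`End (Region K S) = K`, whose only idempotents are `0` and `1`. -/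

lemma Submodule.coe_linearMap_apply_eq_mul {R : Type*} [CommSemiring R]
    {p q : Submodule R R} (f : p →ₗ[R] q) (hp : (1 : R) ∈ p) (x : p) :
    (f x : R) = x * f ⟨1, hp⟩ := by
  have hx : x = (x : R) • (⟨1, hp⟩ : p) := Subtype.ext (mul_one _).symm
  conv_lhs => rw [hx, map_smul]
  rfl

namespace Region

variable {K : Type} [Field K] {G : Type} [LinearOrder G] {S : Set G}

lemma isZero_obj_of_notMem {t : G} (ht : t ∉ S) : IsZero ((Region K S).obj t) := by
  rw [ModuleCat.isZero_iff_subsingleton]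
  refine ⟨fun x y => Subtype.ext ?_⟩
  rw [x.2.resolve_right ht, y.2.resolve_right ht]

lemma not_isZero {t : G} (ht : t ∈ S) : ¬ IsZero (Region K S) := fun hz => by
  have := ModuleCat.isZero_iff_subsingleton.mp (hz.obj t)
  exact one_ne_zero <|
    congrArg Subtype.val (Subsingleton.elim (α := (Region K S).obj t) ⟨1, Or.inr ht⟩ 0)

lemma hom_apply_val {s t : G} (hs : s ∈ S) (f : (Region K S).obj s ⟶ (Region K S).obj t)
    (x : (Region K S).obj s) : (f.hom x).val = x.val * (f.hom ⟨1, Or.inr hs⟩).val :=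
  Submodule.coe_linearMap_apply_eq_mul f.hom (Or.inr hs) x

noncomputable def scalar (e : Region K S ⟶ Region K S) {t : G} (ht : t ∈ S) : K :=
  ((e.app t).hom ⟨1, Or.inr ht⟩).val

lemma map_apply_val {s t : G} (hst : s ≤ t) (hS : Set.Icc s t ⊆ S) (x : (Region K S).obj s) :
    (((Region K S).map (homOfLE hst)).hom x).val = x.val :=
  (regionMap_apply_coe K S hst x).trans (if_pos hS)

lemma scalar_eq_of_le (hconv : S.OrdConnected) (e : Region K S ⟶ Region K S) {s t : G}
    (hs : s ∈ S) (ht : t ∈ S) (hst : s ≤ t) : scalar e hs = scalar e ht := by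
  have hone : ((Region K S).map (homOfLE hst)).hom ⟨1, Or.inr hs⟩ = ⟨1, Or.inr ht⟩ :=
    Subtype.ext (map_apply_val hst (hconv.out hs ht) _)
  have hnat : (e.app t).hom (((Region K S).map (homOfLE hst)).hom ⟨1, Or.inr hs⟩) =
      ((Region K S).map (homOfLE hst)).hom ((e.app s).hom ⟨1, Or.inr hs⟩) :=
    congrArg (fun f => f.hom ⟨1, Or.inr hs⟩) (e.naturality (homOfLE hst))
  rw [hone] at hnat
  rw [scalar, scalar, hnat, map_apply_val hst (hconv.out hs ht)]

lemma scalar_eq (hconv : S.OrdConnected) (e : Region K S ⟶ Region K S) {s t : G}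
    (hs : s ∈ S) (ht : t ∈ S) : scalar e hs = scalar e ht := by
  rcases le_total s t with hst | hts
  · exact scalar_eq_of_le hconv e hs ht hst
  · exact (scalar_eq_of_le hconv e ht hs hts).symm

theorem eq_scalar_smul_id (hconv : S.OrdConnected) (e : Region K S ⟶ Region K S) {t₀ : G}
    (ht₀ : t₀ ∈ S) : e = scalar e ht₀ • 𝟙 (Region K S) := by
  refine NatTrans.ext (funext fun t => ?_)
  by_cases ht : t ∈ S
  · ext x
    refine Subtype.ext ?_
    rw [hom_apply_val ht, scalar_eq hconv e ht₀ ht]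
    exact mul_comm _ _
  · exact (isZero_obj_of_notMem ht).eq_of_src _ _

end Region

/-- an interval module over a nonempty convex subset of ℝ has only
trivial idempotent endomorphisms; consequently it is indecomposable. -/
theorem region_idempotent_trivial (K : Type) [Field K]
    (S : Set ℝ) (hS : S.Nonempty) (hconv : S.OrdConnected) :
    (¬ IsZero (Region K S)) ∧
      ∀ e : Region K S ⟶ Region K S, e ≫ e = e →
        e = 0 ∨ e = 𝟙 (Region K S) := by
  obtain ⟨t₀, ht₀⟩ := hS
  have hid : 𝟙 (Region K S) ≠ 0 := fun h =>
    Region.not_isZero ht₀ ((IsZero.iff_id_eq_zero _).mpr h)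
  refine ⟨Region.not_isZero ht₀, fun e he => ?_⟩
  rw [Region.eq_scalar_smul_id hconv e ht₀] at he ⊢
  have hc : IsIdempotentElem (Region.scalar e ht₀) := by
    simp only [Linear.smul_comp, Linear.comp_smul, Category.id_comp, smul_smul] at he
    exact smul_left_injective K hid he
  rcases IsIdempotentElem.iff_eq_zero_or_one.mp hc with h | h
  · simp [h]
  · simp [h]
end
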